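/- arXiv:0904.3740 — 6 statements merged into one kernel-verified Lean document; each statement's English description precedes it below -/
import Mathlib

section
/- Let b ≥ 2 and let B_1,...,B_n be i.i.d. uniform on {0,...,b-1}. Letting X_i be the indicator that B_i > B_{i+1}, the covariance of X_i and X_{i+1} equals -(1/12)(1 - 1/b²). -/
open Finset



lemma card_ne_two {n : ℕ} (j k : Fin n) (hjk : j ≠ k) :
    Fintype.card {a : Fin n // a ≠ j ∧ a ≠ k} = n - 2 := by
  rw [Fintype.card_subtype]
  have : (univ.filter fun a : Fin n => a ≠ j ∧ a ≠ k) = univ \ {j, k} := by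
    ext a; simp [not_or]
  rw [this, card_sdiff_of_subset (subset_univ _), card_univ, Fintype.card_fin, card_pair hjk]

lemma filter_pair_card {n b : ℕ} (j k : Fin n) (hjk : j ≠ k) :
    (univ.filter fun B : Fin n → Fin b => B k < B j).card
      = (univ.filter fun q : Fin b × Fin b => q.2 < q.1).card * b ^ (n - 2) := by
  rw [← Fintype.card_subtype, ← Fintype.card_subtype]
  have e : {B : Fin n → Fin b // B k < B j}
      ≃ {q : Fin b × Fin b // q.2 < q.1} × ({a : Fin n // a ≠ j ∧ a ≠ k} → Fin b) :=
  { toFun := fun B => (⟨(B.1 j, B.1 k), B.2⟩, fun a => B.1 a.1)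
    invFun := fun x =>
      ⟨fun a => if h : a = j then x.1.1.1 else if h' : a = k then x.1.1.2 else x.2 ⟨a, h, h'⟩,
        by simp [Ne.symm hjk]; exact x.1.2⟩
    left_inv := by
      rintro ⟨B, hB⟩
      ext a
      by_cases h : a = j
      · subst h; simp
      · by_cases h' : a = k <;> simp [h, h', Ne.symm hjk]
    right_inv := by
      rintro ⟨⟨⟨u, v⟩, huv⟩, g⟩
      refine Prod.ext ?_ ?_
      · apply Subtype.ext; simp [Ne.symm hjk]
      · funext a
        simp [a.2.1, a.2.2] }
  rw [Fintype.card_congr e, Fintype.card_prod, Fintype.card_fun, card_ne_two j k hjk,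
    Fintype.card_fin]


lemma card_ne_three {n : ℕ} (j k l : Fin n) (hjk : j ≠ k) (hjl : j ≠ l) (hkl : k ≠ l) :
    Fintype.card {a : Fin n // a ≠ j ∧ a ≠ k ∧ a ≠ l} = n - 3 := by
  rw [Fintype.card_subtype]
  have : (univ.filter fun a : Fin n => a ≠ j ∧ a ≠ k ∧ a ≠ l) = univ \ {j, k, l} := by
    ext a; simp [not_or]
  rw [this, card_sdiff_of_subset (subset_univ _), card_univ, Fintype.card_fin]
  rw [card_insert_of_notMem (by simp [hjk, hjl]), card_pair hkl]

lemma filter_triple_card {n b : ℕ} (j k l : Fin n) (hjk : j ≠ k) (hjl : j ≠ l) (hkl : k ≠ l) :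
    (univ.filter fun B : Fin n → Fin b => B k < B j ∧ B l < B k).card
      = (univ.filter fun t : Fin b × Fin b × Fin b => t.2.1 < t.1 ∧ t.2.2 < t.2.1).card
        * b ^ (n - 3) := by
  rw [← Fintype.card_subtype, ← Fintype.card_subtype]
  have e : {B : Fin n → Fin b // B k < B j ∧ B l < B k}
      ≃ {t : Fin b × Fin b × Fin b // t.2.1 < t.1 ∧ t.2.2 < t.2.1}
        × ({a : Fin n // a ≠ j ∧ a ≠ k ∧ a ≠ l} → Fin b) :=
  { toFun := fun B => (⟨(B.1 j, B.1 k, B.1 l), B.2⟩, fun a => B.1 a.1)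
    invFun := fun x =>
      ⟨fun a => if h : a = j then x.1.1.1 else if h' : a = k then x.1.1.2.1
          else if h'' : a = l then x.1.1.2.2 else x.2 ⟨a, h, h', h''⟩,
        by simp [Ne.symm hjk, Ne.symm hjl, Ne.symm hkl]; exact x.1.2⟩
    left_inv := by
      rintro ⟨B, hB⟩
      ext a
      by_cases h : a = j
      · subst h; simp
      · by_cases h' : a = k
        · subst h'; simp [Ne.symm hjk]
        · by_cases h'' : a = l <;> simp [h, h', h'', Ne.symm hjl, Ne.symm hkl]
    right_inv := by
      rintro ⟨⟨⟨u, v, w⟩, huv⟩, g⟩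
      refine Prod.ext ?_ ?_
      · apply Subtype.ext; simp [Ne.symm hjk, Ne.symm hjl, Ne.symm hkl]
      · funext a
        simp [a.2.1, a.2.2.1, a.2.2.2] }
  rw [Fintype.card_congr e, Fintype.card_prod, Fintype.card_fun,
    card_ne_three j k l hjk hjl hkl, Fintype.card_fin]


lemma npair_nat (b : ℕ) :
    (univ.filter fun q : Fin b × Fin b => q.2 < q.1).card = ∑ x : Fin b, (x : ℕ) := by
  rw [← Fintype.card_subtype]
  have e : {q : Fin b × Fin b // q.2 < q.1} ≃ Σ x : Fin b, {y : Fin b // y < x} :=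
  { toFun := fun q => ⟨q.1.1, q.1.2, q.2⟩
    invFun := fun s => ⟨(s.1, s.2.1), s.2.2⟩
    left_inv := fun _ => rfl
    right_inv := fun _ => rfl }
  rw [Fintype.card_congr e, Fintype.card_sigma]
  congr 1; funext x
  rw [Fintype.card_subtype]
  have : (univ.filter fun y : Fin b => y < x) = Finset.Iio x := by ext y; simp
  rw [this, Fin.card_Iio]

lemma ntrip_nat (b : ℕ) :
    (univ.filter fun t : Fin b × Fin b × Fin b => t.2.1 < t.1 ∧ t.2.2 < t.2.1).card
      = ∑ x : Fin b, (univ.filter fun q : Fin (x : ℕ) × Fin (x : ℕ) => q.2 < q.1).card := by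
  rw [← Fintype.card_subtype]
  have e : {t : Fin b × Fin b × Fin b // t.2.1 < t.1 ∧ t.2.2 < t.2.1}
      ≃ Σ x : Fin b, {q : Fin (x : ℕ) × Fin (x : ℕ) // q.2 < q.1} :=
  { toFun := fun t => ⟨t.1.1, (⟨t.1.2.1, t.2.1⟩, ⟨t.1.2.2, lt_trans t.2.2 t.2.1⟩), t.2.2⟩
    invFun := fun s => ⟨(s.1, ⟨s.2.1.1, lt_trans s.2.1.1.isLt s.1.isLt⟩,
        ⟨s.2.1.2, lt_trans s.2.1.2.isLt s.1.isLt⟩), s.2.1.1.isLt, s.2.2⟩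
    left_inv := fun _ => rfl
    right_inv := fun _ => rfl }
  rw [Fintype.card_congr e, Fintype.card_sigma]
  congr 1; funext x
  rw [Fintype.card_subtype]

lemma gaussQ (m : ℕ) : (∑ x ∈ range m, (x : ℚ)) = m * (m - 1) / 2 := by
  induction m with
  | zero => simp
  | succ k ih => rw [sum_range_succ, ih]; push_cast; ring

lemma npairQ (m : ℕ) :
    (((univ.filter fun q : Fin m × Fin m => q.2 < q.1).card : ℕ) : ℚ) = m * (m - 1) / 2 := by
  rw [npair_nat]
  push_cast
  rw [Fin.sum_univ_eq_sum_range (fun x => (x : ℚ)), gaussQ]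

lemma ntripQ (b : ℕ) :
    (((univ.filter fun t : Fin b × Fin b × Fin b =>
        t.2.1 < t.1 ∧ t.2.2 < t.2.1).card : ℕ) : ℚ) = b * (b - 1) * (b - 2) / 6 := by
  rw [ntrip_nat]
  push_cast
  rw [Fin.sum_univ_eq_sum_range (fun x => (((univ.filter
      fun q : Fin x × Fin x => q.2 < q.1).card : ℕ) : ℚ))]
  have : ∀ m : ℕ, (∑ x ∈ range m, (((univ.filter
      fun q : Fin x × Fin x => q.2 < q.1).card : ℕ) : ℚ)) = m * (m - 1) * (m - 2) / 6 := by
    intro m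
    induction m with
    | zero => simp
    | succ k ih => rw [sum_range_succ, ih, npairQ]; push_cast; ring
  exact this b

/-- The covariance of consecutive descent indicators for i.i.d. uniform base-`b` digits
equals `-(1/12)(1 - 1/b²)`. -/
theorem carries_consecutive_covariance (b n : ℕ) (hb : 2 ≤ b) (i : ℕ) (hi : i + 2 < n) :
    ((Finset.univ.filter (fun B : Fin n → Fin b =>
        B ⟨i + 1, by omega⟩ < B ⟨i, by omega⟩ ∧ B ⟨i + 2, hi⟩ < B ⟨i + 1, by omega⟩)).card : ℚ)
        / (b ^ n : ℚ)
      - (((Finset.univ.filter (fun B : Fin n → Fin b =>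
            B ⟨i + 1, by omega⟩ < B ⟨i, by omega⟩)).card : ℚ) / (b ^ n : ℚ))
        * (((Finset.univ.filter (fun B : Fin n → Fin b =>
            B ⟨i + 2, hi⟩ < B ⟨i + 1, by omega⟩)).card : ℚ) / (b ^ n : ℚ))
      = -(1 / 12) * (1 - 1 / (b ^ 2 : ℚ)) := by
  have hjk : (⟨i, by omega⟩ : Fin n) ≠ ⟨i + 1, by omega⟩ := by
    simp [Fin.ext_iff]
  have hjl : (⟨i, by omega⟩ : Fin n) ≠ ⟨i + 2, hi⟩ := by
    simp [Fin.ext_iff]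
  have hkl : (⟨i + 1, by omega⟩ : Fin n) ≠ ⟨i + 2, hi⟩ := by
    simp [Fin.ext_iff]
  rw [filter_triple_card (b := b) ⟨i, by omega⟩ ⟨i + 1, by omega⟩ ⟨i + 2, hi⟩ hjk hjl hkl,
    filter_pair_card (b := b) ⟨i, by omega⟩ ⟨i + 1, by omega⟩ hjk,
    filter_pair_card (b := b) ⟨i + 1, by omega⟩ ⟨i + 2, hi⟩ hkl]
  push_cast
  rw [ntripQ, npairQ]
  have hb0 : (b : ℚ) ≠ 0 := by
    have : b ≠ 0 := by omega
    exact_mod_cast this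
  have e1 : (b : ℚ) ^ n = (b : ℚ) ^ (n - 3) * (b : ℚ) ^ 3 := by
    rw [← pow_add]; congr 1; omega
  have e2 : (b : ℚ) ^ (n - 2) = (b : ℚ) ^ (n - 3) * (b : ℚ) := by
    rw [← pow_succ]; congr 1; omega
  rw [e1, e2]
  have hp : (b : ℚ) ^ (n - 3) ≠ 0 := pow_ne_zero _ hb0
  field_simp
  ring
end

section
/- Let b ≥ 2 and let S = {s_1 < ... < s_k} ⊆ {1,...,n-1}, and set s_0 = 0, s_{k+1} = n. Then the number of sequences in {0,...,b-1}^n whose descent set equals S is the determinant of the (k+1)×(k+1) matrix whose (i,j) entry, for 0 ≤ i,j ≤ k, is C(s_{j+1} - s_i + b - 1, b-1) if s_{j+1} ≥ s_i and 0 otherwise (so the entries on the first subdiagonal, where s_{j+1} = s_i, equal 1). -/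
open Finset

def dcount (b m : ℕ) (T : Finset ℕ) : ℕ :=
  (Finset.univ.filter (fun B : Fin m → Fin b =>
    ∀ i : Fin (m - 1), (B ⟨i.val + 1, by have := i.isLt; omega⟩
        < B ⟨i.val, by have := i.isLt; omega⟩ ↔ i.val + 1 ∈ T))).card

lemma adj_mono {b m : ℕ} {B : Fin m → Fin b}
    (h : ∀ i : Fin (m - 1), ¬ (B ⟨i.val + 1, by have := i.isLt; omega⟩
        < B ⟨i.val, by have := i.isLt; omega⟩)) :
    ∀ i j : Fin m, i.val ≤ j.val → B i ≤ B j := by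
  suffices H : ∀ d (i j : Fin m), j.val = i.val + d → B i ≤ B j by
    intro i j hij
    exact H (j.val - i.val) i j (by omega)
  intro d
  induction d with
  | zero => intro i j hj; exact le_of_eq (congrArg B (Fin.ext (by omega)))
  | succ d ih =>
    intro i j hj
    have hm : i.val + d < m := by have := j.isLt; omega
    have h1 : B i ≤ B ⟨i.val + d, hm⟩ := ih i _ rfl
    have hd2 : i.val + d < m - 1 := by have := j.isLt; omega
    have h2 := h ⟨i.val + d, hd2⟩
    have hje : (⟨(i.val + d) + 1, by omega⟩ : Fin m) = j := Fin.ext (by simp; omega)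
    rw [hje] at h2
    exact h1.trans (le_of_not_gt h2)

/-- gap lemma for strictly monotone (on values) functions -/
lemma sm_gap {m : ℕ} {g : Fin m → ℕ} (hg : ∀ i j : Fin m, i.val < j.val → g i < g j) :
    ∀ i j : Fin m, i.val ≤ j.val → g i + (j.val - i.val) ≤ g j := by
  suffices H : ∀ d (i j : Fin m), j.val = i.val + d → g i + d ≤ g j by
    intro i j hij
    have := H (j.val - i.val) i j (by omega); omega
  intro d
  induction d with
  | zero => intro i j hj; have : i = j := Fin.ext (by omega); simp [this]
  | succ d ih =>
    intro i j hj
    have hm : i.val + d < m := by have := j.isLt; omega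
    have h1 := ih i ⟨i.val + d, hm⟩ rfl
    have h2 := hg ⟨i.val + d, hm⟩ j (by simp; omega)
    omega

lemma mono_count (b m : ℕ) (hb : 1 ≤ b) : dcount b m ∅ = (m + (b - 1)).choose (b - 1) := by
  obtain ⟨c, rfl⟩ : ∃ c, b = c + 1 := ⟨b - 1, by omega⟩
  simp only [Nat.add_sub_cancel]
  unfold dcount
  have key : (Finset.univ.filter (fun B : Fin m → Fin (c+1) =>
      ∀ i : Fin (m - 1), (B ⟨i.val + 1, by have := i.isLt; omega⟩
        < B ⟨i.val, by have := i.isLt; omega⟩ ↔ i.val + 1 ∈ (∅ : Finset ℕ)))).card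
      = (Finset.powersetCard m (Finset.univ : Finset (Fin (m + c)))).card := by
    refine Finset.card_bij'
      (i := fun B _ => Finset.image
        (fun i : Fin m => (⟨(B i).val + i.val, by have := (B i).isLt; have := i.isLt; omega⟩
          : Fin (m + c))) Finset.univ)
      (j := fun T hT => fun i : Fin m =>
        ⟨(T.orderEmbOfFin (Finset.mem_powersetCard_univ.mp hT) i).val - i.val, by
          have hc := Finset.mem_powersetCard_univ.mp hT
          have hsm : ∀ x y : Fin m, x.val < y.val →
              (T.orderEmbOfFin hc x).val < (T.orderEmbOfFin hc y).val := by
            intro x y hxy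
            exact (T.orderEmbOfFin hc).strictMono (by exact hxy)
          have hlast : m - 1 < m := by have := i.isLt; omega
          have := sm_gap (g := fun x => (T.orderEmbOfFin hc x).val) hsm i ⟨m - 1, hlast⟩
            (by simp; omega)
          have hub := (T.orderEmbOfFin hc ⟨m - 1, hlast⟩).isLt
          simp only at this
          omega⟩) ?_ ?_ ?_ ?_
    · -- hi : image is in powersetCard
      intro B hB
      simp only [Finset.mem_filter, Finset.mem_univ, true_and, Finset.notMem_empty,
        iff_false] at hB
      rw [Finset.mem_powersetCard_univ]
      have hinj0 : Function.Injective
          (fun i : Fin m => (⟨(B i).val + i.val, by have := (B i).isLt; have := i.isLt; omega⟩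
            : Fin (m + c))) := by
        intro x y hxy
        have hval : (B x).val + x.val = (B y).val + y.val := congrArg Fin.val hxy
        rcases lt_trichotomy x.val y.val with h | h | h
        · have := adj_mono hB x y (le_of_lt h); rw [Fin.le_def] at this; omega
        · exact Fin.ext h
        · have := adj_mono hB y x (le_of_lt h); rw [Fin.le_def] at this; omega
      rw [Finset.card_image_of_injective _ hinj0, Finset.card_univ, Fintype.card_fin]
    · -- hj : preimage satisfies predicate
      intro T hT
      simp only [Finset.mem_filter, Finset.mem_univ, true_and, Finset.notMem_empty,
        iff_false]
      intro i
      have hc := Finset.mem_powersetCard_univ.mp hT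
      rw [Fin.lt_def]
      simp only [not_lt]
      have h1 : (T.orderEmbOfFin hc ⟨i.val, by have := i.isLt; omega⟩).val
          < (T.orderEmbOfFin hc ⟨i.val + 1, by have := i.isLt; omega⟩).val :=
        (T.orderEmbOfFin hc).strictMono (by simp [Fin.lt_def])
      have h2 : i.val ≤ (T.orderEmbOfFin hc ⟨i.val, by have := i.isLt; omega⟩).val := by
        have hsm : ∀ x y : Fin m, x.val < y.val →
            (T.orderEmbOfFin hc x).val < (T.orderEmbOfFin hc y).val := fun x y hxy =>
          (T.orderEmbOfFin hc).strictMono (by exact hxy)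
        have := sm_gap (g := fun x => (T.orderEmbOfFin hc x).val) hsm
          ⟨0, by have := i.isLt; omega⟩ ⟨i.val, by have := i.isLt; omega⟩ (by simp)
        simp only at this
        omega
      omega
    · -- left inverse
      intro B hB
      simp only [Finset.mem_filter, Finset.mem_univ, true_and, Finset.notMem_empty,
        iff_false] at hB
      funext i
      apply Fin.ext
      have hinj : Function.Injective
          (fun i : Fin m => (⟨(B i).val + i.val, by have := (B i).isLt; have := i.isLt; omega⟩
            : Fin (m + c))) := by
        intro x y hxy
        have hval : (B x).val + x.val = (B y).val + y.val := congrArg Fin.val hxy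
        rcases lt_trichotomy x.val y.val with h | h | h
        · have := adj_mono hB x y (le_of_lt h); rw [Fin.le_def] at this; omega
        · exact Fin.ext h
        · have := adj_mono hB y x (le_of_lt h); rw [Fin.le_def] at this; omega
      have hcard : (Finset.image
          (fun i : Fin m => (⟨(B i).val + i.val, by have := (B i).isLt; have := i.isLt; omega⟩
            : Fin (m + c))) Finset.univ).card = m := by
        rw [Finset.card_image_of_injective _ hinj, Finset.card_univ, Fintype.card_fin]
      have huniq := Finset.orderEmbOfFin_unique (f := fun i : Fin m =>
          (⟨(B i).val + i.val, by have := (B i).isLt; have := i.isLt; omega⟩ : Fin (m + c)))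
        hcard (fun x => Finset.mem_image_of_mem _ (Finset.mem_univ x)) ?_
      · simp only [congrFun huniq.symm i]
        omega
      · intro x y hxy
        rw [Fin.lt_def] at hxy ⊢
        have := adj_mono hB x y (le_of_lt hxy)
        rw [Fin.le_def] at this
        simp only
        omega
    · -- right inverse
      intro T hT
      have hc := Finset.mem_powersetCard_univ.mp hT
      have hge : ∀ i : Fin m, i.val ≤ (T.orderEmbOfFin hc i).val := by
        intro i
        have hsm : ∀ x y : Fin m, x.val < y.val →
            (T.orderEmbOfFin hc x).val < (T.orderEmbOfFin hc y).val := fun x y hxy =>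
          (T.orderEmbOfFin hc).strictMono (by exact hxy)
        have := sm_gap (g := fun x => (T.orderEmbOfFin hc x).val) hsm
          ⟨0, by have := i.isLt; omega⟩ i (by simp)
        simp only at this; omega
      have himg : (Finset.image (fun i : Fin m => T.orderEmbOfFin hc i) Finset.univ) = T := by
        apply Finset.eq_of_subset_of_card_le
        · intro x hx
          simp only [Finset.mem_image] at hx
          obtain ⟨i, _, rfl⟩ := hx
          exact Finset.orderEmbOfFin_mem T hc i
        · rw [Finset.card_image_of_injective _ (T.orderEmbOfFin hc).injective,
            Finset.card_univ, Fintype.card_fin, hc]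
      refine Eq.trans (Finset.image_congr ?_) himg
      intro i _
      apply Fin.ext
      simp only
      have := hge i
      omega
  rw [key, Finset.card_powersetCard, Finset.card_univ, Fintype.card_fin,
    Nat.choose_symm_add]

lemma partition_lemma (b m p : ℕ) (R : Finset ℕ) (hp : 1 ≤ p) (hpm : p < m) (hpR : p ∉ R) :
    dcount b m (insert p R) + dcount b m R
      = (Finset.univ.filter (fun B : Fin m → Fin b =>
          ∀ i : Fin (m - 1), i.val + 1 ≠ p → (B ⟨i.val + 1, by have := i.isLt; omega⟩
            < B ⟨i.val, by have := i.isLt; omega⟩ ↔ i.val + 1 ∈ R))).card := by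
  classical
  obtain ⟨q, hq1⟩ : ∃ q : Fin (m - 1), q.val + 1 = p := ⟨⟨p - 1, by omega⟩, by simp; omega⟩
  set s := (Finset.univ.filter (fun B : Fin m → Fin b =>
      ∀ i : Fin (m - 1), i.val + 1 ≠ p → (B ⟨i.val + 1, by have := i.isLt; omega⟩
        < B ⟨i.val, by have := i.isLt; omega⟩ ↔ i.val + 1 ∈ R))) with hs
  have key := Finset.card_filter_add_card_filter_not
    (s := s) (p := fun B : Fin m → Fin b =>
      B ⟨q.val + 1, by have := q.isLt; omega⟩ < B ⟨q.val, by have := q.isLt; omega⟩)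
  rw [← key]
  congr 1
  · -- filter desc = dcount filter (insert p R)
    unfold dcount
    congr 1
    rw [hs, Finset.filter_filter]
    apply Finset.filter_congr
    intro B _
    constructor
    · intro hall
      constructor
      · intro i hip
        have h2 := hall i
        rw [Finset.mem_insert] at h2
        constructor
        · intro h
          rcases h2.mp h with h3 | h3; · exact absurd h3 hip
          · exact h3
        · intro h; exact h2.mpr (Or.inr h)
      · have := (hall q).mpr (by rw [hq1]; exact Finset.mem_insert_self p R)
        exact this
    · rintro ⟨hfree, hdesc⟩ i
      by_cases hip : i.val + 1 = p
      · have : i = q := Fin.ext (Nat.succ_injective (hip.trans hq1.symm))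
        subst this
        constructor
        · intro _
          rw [hq1]
          exact Finset.mem_insert_self p R
        · exact fun _ => hdesc
      · have h2 := hfree i hip
        rw [Finset.mem_insert]
        constructor
        · intro h; exact Or.inr (h2.mp h)
        · intro h
          rcases h with h | h; · exact absurd h hip
          · exact h2.mpr h
  · -- filter ¬desc = dcount filter R
    unfold dcount
    congr 1
    rw [hs, Finset.filter_filter]
    apply Finset.filter_congr
    intro B _
    constructor
    · intro hall
      refine ⟨fun i hip => hall i, ?_⟩
      intro h
      have := (hall q).mp h
      rw [hq1] at this
      exact hpR this
    · rintro ⟨hfree, hnd⟩ i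
      by_cases hip : i.val + 1 = p
      · have : i = q := Fin.ext (Nat.succ_injective (hip.trans hq1.symm))
        subst this
        constructor
        · intro h; exact absurd h hnd
        · intro h; rw [hq1] at h; exact absurd h hpR
      · exact hfree i hip

lemma memshift {R : Finset ℕ} {p : ℕ} (hR : ∀ r ∈ R, p < r) (y : ℕ) (hpy : p ≤ y) :
    y + 1 ∈ R ↔ (y - p) + 1 ∈ R.image (fun r => r - p) := by
  constructor
  · intro h
    rw [Finset.mem_image]
    exact ⟨y + 1, h, by omega⟩
  · intro h
    rw [Finset.mem_image] at h
    obtain ⟨r, hr, hr2⟩ := h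
    have := hR r hr
    have : r = y + 1 := by omega
    rwa [← this]

set_option maxHeartbeats 2000000 in
lemma split_lemma (b m p : ℕ) (R : Finset ℕ) (hp : 1 ≤ p) (hpm : p ≤ m)
    (hR : ∀ r ∈ R, p < r) :
    (Finset.univ.filter (fun B : Fin m → Fin b =>
        ∀ i : Fin (m - 1), i.val + 1 ≠ p → (B ⟨i.val + 1, by have := i.isLt; omega⟩
          < B ⟨i.val, by have := i.isLt; omega⟩ ↔ i.val + 1 ∈ R))).card
      = dcount b p ∅ * dcount b (m - p) (R.image (fun r => r - p)) := by
  classical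
  unfold dcount
  rw [← Finset.card_product]
  refine Finset.card_bij'
    (i := fun B _ => (fun i : Fin p => B ⟨i.val, lt_of_lt_of_le i.isLt hpm⟩,
        fun i : Fin (m - p) => B ⟨p + i.val, by have := i.isLt; omega⟩))
    (j := fun P _ => fun jj : Fin m => if h : jj.val < p then P.1 ⟨jj.val, h⟩
        else P.2 ⟨jj.val - p, by have := jj.isLt; omega⟩) ?_ ?_ ?_ ?_
  · -- hi
    intro B hB
    simp only [Finset.mem_filter, Finset.mem_univ, true_and] at hB
    rw [Finset.mem_product]
    constructor
    · simp only [Finset.mem_filter, Finset.mem_univ, true_and, Finset.notMem_empty,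
        iff_false]
      intro i
      have hlt : i.val < m - 1 := by have := i.isLt; omega
      have h1 := hB ⟨i.val, hlt⟩ (by simp; have := i.isLt; omega)
      simp only at h1
      intro hcon
      have : i.val + 1 ∈ R := h1.mp hcon
      have := hR _ this
      have := i.isLt
      omega
    · simp only [Finset.mem_filter, Finset.mem_univ, true_and]
      intro i
      have hlt : p + i.val < m - 1 := by have := i.isLt; omega
      have h1 := hB ⟨p + i.val, hlt⟩ (by simp; omega)
      simp only at h1
      have hmem := memshift hR (p + i.val) (by omega)
      have heq : p + i.val - p = i.val := by omega
      rw [heq] at hmem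
      rw [← hmem]
      exact h1
  · -- hj
    intro P hP
    rw [Finset.mem_product] at hP
    obtain ⟨hP1, hP2⟩ := hP
    simp only [Finset.mem_filter, Finset.mem_univ, true_and, Finset.notMem_empty,
      iff_false] at hP1 hP2
    simp only [Finset.mem_filter, Finset.mem_univ, true_and]
    intro i hip
    rcases lt_or_ge (i.val + 1) p with hlt | hge
    · have h1 : i.val + 1 < p := hlt
      have h2 : i.val < p := by omega
      rw [dif_pos h1, dif_pos h2]
      have := hP1 ⟨i.val, by omega⟩
      simp only at this
      constructor
      · intro hcon; exact absurd hcon this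
      · intro hcon
        have := hR _ hcon
        omega
    · have hgep : p ≤ i.val := by omega
      have h1 : ¬ (i.val + 1 < p) := by omega
      have h2 : ¬ (i.val < p) := by omega
      rw [dif_neg h1, dif_neg h2]
      have hlt2 : i.val - p < m - p - 1 := by have := i.isLt; omega
      have := hP2 ⟨i.val - p, hlt2⟩
      simp only at this
      have hidx : (⟨i.val + 1 - p, by have := i.isLt; omega⟩ : Fin (m - p))
          = ⟨(i.val - p) + 1, by have := i.isLt; omega⟩ := Fin.ext (by simp; omega)
      rw [hidx, this]
      exact (memshift hR i.val hgep).symm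
  · -- left inverse
    intro B hB
    funext jj
    by_cases h : jj.val < p
    · simp only [dif_pos h]
    · simp only [dif_neg h]
      exact congrArg B (Fin.ext (by simp; omega))
  · -- right inverse
    intro P hP
    refine Prod.ext ?_ ?_
    · funext ii
      simp only [dif_pos ii.isLt]
    · funext ii
      have h : ¬ (p + ii.val < p) := by omega
      simp only [dif_neg h]
      exact congrArg P.2 (Fin.ext (by simp))

lemma tmono {k : ℕ} {t : ℕ → ℕ} (h : ∀ i ≤ k, t i < t (i + 1)) :
    ∀ i j, i < j → j ≤ k + 1 → t i < t j := by
  intro i j hij hjk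
  induction j with
  | zero => omega
  | succ j ihj =>
    rcases Nat.lt_or_ge i j with h2 | h2
    · exact lt_trans (ihj h2 (by omega)) (h j (by omega))
    · have : i = j := by omega
      subst this
      exact h i (by omega)

set_option maxHeartbeats 2000000 in
lemma main_ind (b : ℕ) (hb : 2 ≤ b) :
    ∀ (k : ℕ) (t : ℕ → ℕ), (∀ i ≤ k, t i < t (i + 1)) →
      ((dcount b (t (k + 1) - t 0) ((Finset.Icc 1 k).image (fun j => t j - t 0)) : ℤ)
        = Matrix.det (Matrix.of fun i j : Fin (k + 1) =>
            ((t (j.val + 1) + (b - 1) - t i.val).choose (b - 1) : ℤ))) := by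
  intro k
  induction k with
  | zero =>
    intro t ht
    have h01 : t 0 < t 1 := ht 0 (by omega)
    rw [show (Finset.Icc 1 0) = (∅ : Finset ℕ) by simp, Finset.image_empty]
    rw [Matrix.det_fin_one]
    rw [mono_count b _ (by omega)]
    simp only [Matrix.of_apply]
    norm_num
    congr 2
    omega
  | succ k ih =>
    intro t ht
    -- basic facts
    have htm : ∀ i j, i < j → j ≤ k + 2 → t i < t j := tmono ht
    have h01 : t 0 < t 1 := ht 0 (by omega)
    have h1k : t 1 < t (k + 2) := htm 1 (k + 2) (by omega) (by omega)
    set p := t 1 - t 0 with hpdef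
    set m := t (k + 2) - t 0 with hmdef
    set R := (Finset.Icc 1 k).image (fun j => t (j + 1) - t 0) with hRdef
    have hp1 : 1 ≤ p := by omega
    have hpm : p < m := by omega
    have hRgt : ∀ r ∈ R, p < r := by
      intro r hr
      rw [hRdef, Finset.mem_image] at hr
      obtain ⟨j, hj, rfl⟩ := hr
      rw [Finset.mem_Icc] at hj
      have : t 1 < t (j + 1) := htm 1 (j + 1) (by omega) (by omega)
      omega
    have hpR : p ∉ R := fun h => absurd (hRgt p h) (lt_irrefl p)
    have hT : (Finset.Icc 1 (k + 1)).image (fun j => t j - t 0) = insert p R := by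
      ext x
      simp only [Finset.mem_image, Finset.mem_insert, Finset.mem_Icc, hRdef]
      constructor
      · rintro ⟨j, hj, rfl⟩
        rcases Nat.eq_or_lt_of_le hj.1 with h | h
        · left; rw [← h]
        · right; exact ⟨j - 1, ⟨by omega, by omega⟩, by rw [show j - 1 + 1 = j by omega]⟩
      · rintro (rfl | ⟨j, hj, rfl⟩)
        · exact ⟨1, ⟨le_refl 1, by omega⟩, rfl⟩
        · exact ⟨j + 1, ⟨by omega, by omega⟩, rfl⟩
    -- the two IH applications
    have ih1 := ih (fun j => t (j + 1)) (fun i hi => ht (i + 1) (by omega))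
    try simp only at ih1
    have ih2 := ih (fun j => if j = 0 then t 0 else t (j + 1)) (by
      intro i hi
      by_cases h : i = 0
      · subst h
        simp only [if_pos rfl, if_neg (Nat.one_ne_zero)]
        exact htm 0 2 (by omega) (by omega)
      · simp only [if_neg h, if_neg (Nat.succ_ne_zero i)]
        exact ht (i + 1) (by omega))
    simp only [Nat.succ_ne_zero, if_true, if_false, ite_true, ite_false, eq_self_iff_true,
      Nat.add_one_ne_zero] at ih2
    have hset2 : (Finset.Icc 1 k).image
        (fun j => (if j = 0 then t 0 else t (j + 1)) - t 0) = R := by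
      rw [hRdef]
      apply Finset.image_congr
      intro j hj
      rw [Finset.mem_coe, Finset.mem_Icc] at hj
      simp only [if_neg (show j ≠ 0 by omega)]
    rw [hset2] at ih2
    -- combinatorial recursion
    have hmp : m - p = t (k + 2) - t 1 := by omega
    have hmono := mono_count b p (by omega)
    have hpart := partition_lemma b m p R hp1 hpm hpR
    have hsplit := split_lemma b m p R hp1 (le_of_lt hpm) hRgt
    have hshift : R.image (fun r => r - p) = (Finset.Icc 1 k).image (fun j => t (j + 1) - t 1) := by
      rw [hRdef, Finset.image_image]
      apply Finset.image_congr
      intro j hj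
      rw [Finset.mem_coe, Finset.mem_Icc] at hj
      have : t 1 < t (j + 1) := htm 1 (j + 1) (by clear hpart hsplit; omega)
        (by clear hpart hsplit; omega)
      simp only [Function.comp_apply]
      clear hpart hsplit
      omega
    rw [hmp, hshift] at hsplit
    -- LHS as ℤ
    have hLHS : (dcount b m (insert p R) : ℤ)
        = ((p + (b - 1)).choose (b - 1) : ℤ) * (dcount b (t (k + 2) - t 1)
            ((Finset.Icc 1 k).image (fun j => t (j + 1) - t 1)) : ℤ)
          - (dcount b m R : ℤ) := by
      have := hpart
      rw [hsplit, hmono] at this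
      push_cast
      push_cast at this
      linarith
    clear hpart hsplit
    rw [hT, hLHS, ih1, ih2]
    -- now the determinant side
    have hdet := Matrix.det_succ_column_zero (Matrix.of fun i j : Fin (k + 2) =>
        ((t (j.val + 1) + (b - 1) - t i.val).choose (b - 1) : ℤ))
    rw [hdet, Fin.sum_univ_succ, Fin.sum_univ_succ]
    have hzero : ∀ i : Fin k, ((t ((0 : Fin (k+2)).val + 1) + (b - 1)
        - t (i.succ.succ.val)).choose (b - 1) : ℤ) = 0 := by
      intro i
      have h2i : t 1 < t (i.val + 2) := htm 1 (i.val + 2) (by omega) (by omega)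
      rw [show (0 : Fin (k+2)).val = 0 from rfl,
        show (i.succ.succ : Fin (k+2)).val = i.val + 2 from rfl]
      simp only [Nat.zero_add]
      norm_cast
      apply Nat.choose_eq_zero_of_lt
      omega
    have hsum0 : (∑ i : Fin k, (-1 : ℤ) ^ ((i.succ.succ : Fin (k+2)) : ℕ)
        * (Matrix.of fun i j : Fin (k + 2) =>
          ((t (j.val + 1) + (b - 1) - t i.val).choose (b - 1) : ℤ)) i.succ.succ 0
        * Matrix.det ((Matrix.of fun i j : Fin (k + 2) =>
          ((t (j.val + 1) + (b - 1) - t i.val).choose (b - 1) : ℤ)).submatrix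
            (i.succ.succ).succAbove Fin.succ)) = 0 := by
      apply Finset.sum_eq_zero
      intro i _
      have h2i : t 1 < t (i.val + 2) := htm 1 (i.val + 2) (by omega) (by omega)
      have : ((t ((0 : Fin (k+2)).val + 1) + (b - 1)
          - t (i.succ.succ.val)).choose (b - 1) : ℤ) = 0 := hzero i
      simp only [Matrix.of_apply] at this ⊢
      rw [show ((0 : Fin (k+2)).val) = 0 from rfl] at this
      rw [show ((0 : Fin (k+2)).val) = 0 from rfl]
      rw [this]
      ring
    rw [hsum0, add_zero]
    -- identify the two submatrices
    have hsub0 : ((Matrix.of fun i j : Fin (k + 2) =>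
        ((t (j.val + 1) + (b - 1) - t i.val).choose (b - 1) : ℤ)).submatrix
          (0 : Fin (k+2)).succAbove Fin.succ)
        = Matrix.of fun i j : Fin (k + 1) =>
            ((t (j.val + 1 + 1) + (b - 1) - t (i.val + 1)).choose (b - 1) : ℤ) := by
      ext i j
      simp [Matrix.submatrix_apply, Fin.succAbove_zero, Fin.val_succ]
    have hsub1 : ((Matrix.of fun i j : Fin (k + 2) =>
        ((t (j.val + 1) + (b - 1) - t i.val).choose (b - 1) : ℤ)).submatrix
          (Fin.succ (0 : Fin (k+1))).succAbove Fin.succ)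
        = Matrix.of fun i j : Fin (k + 1) =>
            ((t (j.val + 1 + 1) + (b - 1)
              - (if i.val = 0 then t 0 else t (i.val + 1))).choose (b - 1) : ℤ) := by
      rw [show Fin.succ (0 : Fin (k+1)) = (1 : Fin (k+2)) from rfl]
      ext i j
      simp only [Matrix.submatrix_apply, Matrix.of_apply, Fin.val_succ]
      by_cases h : i.val = 0
      · have : i = 0 := Fin.ext h
        subst this
        rw [Fin.succAbove_of_castSucc_lt 1 0 (by simp [Fin.lt_def])]
        simp [if_pos rfl]
      · rw [Fin.succAbove_of_le_castSucc 1 i (by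
          rw [Fin.le_def]
          simp only [Fin.castSucc]
          simp
          omega)]
        simp only [Fin.val_succ, if_neg h]
    rw [hsub0, hsub1]
    -- final algebra
    have hA00 : ((t ((0 : Fin (k+2)).val + 1) + (b - 1)
        - t (0 : Fin (k+2)).val).choose (b - 1) : ℤ) = ((p + (b - 1)).choose (b - 1) : ℤ) := by
      norm_cast
      rw [show ((0 : Fin (k+2)).val) = 0 from rfl]
      simp only [Nat.zero_add]
      congr 1
      omega
    have hA10 : ((t ((0 : Fin (k+2)).val + 1) + (b - 1)
        - t ((1 : Fin (k+2)).val)).choose (b - 1) : ℤ) = 1 := by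
      norm_cast
      rw [show ((1 : Fin (k+2)).val) = 1 from rfl, show ((0 : Fin (k+2)).val) = 0 from rfl]
      rw [show t 1 + (b - 1) - t 1 = b - 1 by omega]
      exact Nat.choose_self _
    simp only [Matrix.of_apply, Fin.val_zero, Fin.val_succ, Fin.val_one, Nat.zero_add,
      pow_zero, pow_one, one_mul] at hA00 hA10 ⊢
    rw [hA00, hA10]
    ring

/-- The number of sequences in `{0,…,b-1}^n` whose descent set equals
`S = {s 1 < … < s k} ⊆ {1,…,n-1}` is the `(k+1)×(k+1)` determinant with `(i,j)` entry
`C(s_{j+1} - s_i + b - 1, b - 1)`, where `s 0 = 0`, `s (k+1) = n`; entries with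
`s_{j+1} - s_i + b - 1 < b - 1` (in particular those below the first subdiagonal) vanish,
which is automatic from the truncated-subtraction expression used here. -/
theorem count_descent_set_equal_det (b n k : ℕ) (hb : 2 ≤ b) (S : Finset ℕ) (s : ℕ → ℕ)
    (hs0 : s 0 = 0) (hsn : s (k + 1) = n)
    (hmono : ∀ i ≤ k, s i < s (i + 1))
    (hS : S = (Finset.Icc 1 k).image s) :
    ((Finset.univ.filter (fun B : Fin n → Fin b =>
        ∀ i : Fin (n - 1), (B ⟨i.val + 1, by have := i.isLt; omega⟩
            < B ⟨i.val, by have := i.isLt; omega⟩ ↔ i.val + 1 ∈ S))).card : ℤ)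
      = Matrix.det (Matrix.of fun i j : Fin (k + 1) =>
          ((s (j.val + 1) + (b - 1) - s i.val).choose (b - 1) : ℤ)) := by
  subst hS
  have H := main_ind b hb k s hmono
  rw [hs0] at H
  simp only [Nat.sub_zero] at H
  rw [hsn] at H
  exact H
end

section
/- Let (X_i)_{i=1}^{n-1} be a stationary one-dependent binary process and set a_i = P(X_1 = ... = X_{i-1} = 1), a_1 = 1, a_0 = 1, a_i = 0 for i < 0. For a binary string (t_1,...,t_{n-1}) with zeros exactly at positions s_1 < ... < s_k, setting s_0 = 0 and s_{k+1} = n, one has P(X_1=t_1,...,X_{n-1}=t_{n-1}) = det(a_{s_{j+1} - s_i})_{i,j=0}^{k}. -/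
open MeasureTheory ProbabilityTheory

/-- `aFun μ X i` is `a_i = P(X_1 = X_2 = ⋯ = X_{i-1} = 1)`; note `aFun μ X 0 =
aFun μ X 1 = 1` for a probability measure `μ`, matching the convention `a_0 = a_1 = 1`. -/
noncomputable def aFun {Ω : Type*} [MeasurableSpace Ω] (μ : Measure Ω)
    (X : ℕ → Ω → Bool) (i : ℕ) : ℝ :=
  (μ {ω | ∀ j, 1 ≤ j → j + 1 ≤ i → X j ω = true}).toReal

section OneDep
variable {Ω : Type*} [MeasurableSpace Ω] (μ : Measure Ω) (X : ℕ → Ω → Bool)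

/-- canonical pattern event: window `[1, s (k+1) - 1]`, zeros exactly at `s 1, …, s k`. -/
def patSet (k : ℕ) (s : ℕ → ℕ) : Set Ω :=
  {ω | ∀ j, 1 ≤ j → j + 1 ≤ s (k + 1) → (X j ω = true ↔ ∀ i, 1 ≤ i → i ≤ k → s i ≠ j)}

lemma measurableSet_iffPat (hmeas : ∀ i, Measurable (X i)) (p q : ℕ → Prop) :
    MeasurableSet {ω | ∀ j, p j → (X j ω = true ↔ q j)} := by
  have h : {ω | ∀ j, p j → (X j ω = true ↔ q j)}
      = ⋂ j, {ω | p j → (X j ω = true ↔ q j)} := by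
    ext ω; simp [Set.mem_iInter]
  rw [h]
  refine MeasurableSet.iInter fun j => ?_
  by_cases hp : p j
  · by_cases hq : q j
    · have h2 : {ω | p j → (X j ω = true ↔ q j)} = X j ⁻¹' {true} := by
        ext ω; simp [hp, hq]
      rw [h2]; exact (hmeas j) trivial
    · have h2 : {ω | p j → (X j ω = true ↔ q j)} = X j ⁻¹' {false} := by
        ext ω; simp [hp, hq]
      rw [h2]; exact (hmeas j) trivial
  · have h2 : {ω | p j → (X j ω = true ↔ q j)} = Set.univ := by
      ext ω; simp [hp]
    rw [h2]; exact MeasurableSet.univ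

lemma measurableSet_patSet (hmeas : ∀ i, Measurable (X i)) (k : ℕ) (s : ℕ → ℕ) :
    MeasurableSet (patSet X k s) := by
  have h : patSet X k s = {ω | ∀ j, (1 ≤ j ∧ j + 1 ≤ s (k + 1)) →
      (X j ω = true ↔ ∀ i, 1 ≤ i → i ≤ k → s i ≠ j)} := by
    ext ω; simp only [patSet, Set.mem_setOf_eq, and_imp]
  rw [h]; exact measurableSet_iffPat X hmeas _ _

lemma s_lt_of_lt {s : ℕ → ℕ} {K : ℕ} (hm : ∀ i ≤ K, s i < s (i + 1)) :
    ∀ i' i : ℕ, i < i' → i' ≤ K + 1 → s i < s i' := by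
  intro i'
  induction i' with
  | zero => intro i h h'; omega
  | succ m ih =>
    intro i h h'
    rcases Nat.lt_succ_iff_lt_or_eq.mp h with h1 | h1
    · exact lt_trans (ih i h1 (by omega)) (hm m (by omega))
    · subst h1; exact hm i (by omega)

lemma indep_split [IsProbabilityMeasure μ]
    (hdep : ∀ i : ℕ, IndepFun
        (fun ω => fun j : {j : ℕ // 1 ≤ j ∧ j < i} => X j.val ω)
        (fun ω => fun j : {j : ℕ // i < j} => X j.val ω) μ)
    (m M2 : ℕ) (q : ℕ → Prop) :
    μ ({ω | ∀ j, 1 ≤ j → j + 1 ≤ m → (X j ω = true ↔ q j)}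
        ∩ {ω | ∀ j, m < j → j + 1 ≤ M2 → X j ω = true})
    = μ {ω | ∀ j, 1 ≤ j → j + 1 ≤ m → (X j ω = true ↔ q j)}
        * μ {ω | ∀ j, m < j → j + 1 ≤ M2 → X j ω = true} := by
  have h := indepFun_iff_measure_inter_preimage_eq_mul.mp (hdep m)
  have hres := h {y : {j : ℕ // 1 ≤ j ∧ j < m} → Bool | ∀ j', y j' = true ↔ q j'.val}
      {y : {j : ℕ // m < j} → Bool | ∀ j', j'.val + 1 ≤ M2 → y j' = true}
      (by
        have h2 : {y : {j : ℕ // 1 ≤ j ∧ j < m} → Bool | ∀ j', y j' = true ↔ q j'.val}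
            = ⋂ j', (fun y : {j : ℕ // 1 ≤ j ∧ j < m} → Bool => y j') ⁻¹'
              {b : Bool | b = true ↔ q j'.val} := by
          ext y; simp [Set.mem_iInter]
        rw [h2]
        exact MeasurableSet.iInter fun j' => (measurable_pi_apply j') trivial)
      (by
        have h2 : {y : {j : ℕ // m < j} → Bool | ∀ j', j'.val + 1 ≤ M2 → y j' = true}
            = ⋂ j', (fun y : {j : ℕ // m < j} → Bool => y j') ⁻¹'
              {b : Bool | j'.val + 1 ≤ M2 → b = true} := by
          ext y; simp [Set.mem_iInter]
        rw [h2]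
        exact MeasurableSet.iInter fun j' => (measurable_pi_apply j') trivial)
  have e1 : (fun ω => fun j : {j : ℕ // 1 ≤ j ∧ j < m} => X j.val ω) ⁻¹'
      {y | ∀ j', y j' = true ↔ q j'.val}
      = {ω | ∀ j, 1 ≤ j → j + 1 ≤ m → (X j ω = true ↔ q j)} := by
    ext ω
    constructor
    · intro hω j hj1 hj2; exact hω ⟨j, hj1, by omega⟩
    · intro hω j'; exact hω j'.val j'.2.1 (by omega)
  have e2 : (fun ω => fun j : {j : ℕ // m < j} => X j.val ω) ⁻¹'
      {y | ∀ j', j'.val + 1 ≤ M2 → y j' = true}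
      = {ω | ∀ j, m < j → j + 1 ≤ M2 → X j ω = true} := by
    ext ω
    constructor
    · intro hω j hj1 hj2; exact hω ⟨j, hj1⟩ hj2
    · intro hω j' hj'; exact hω j'.val j'.2 hj'
  rw [e1, e2] at hres
  exact hres

lemma shift_ones (hstat : ∀ (k m : ℕ) (t : ℕ → Bool),
      μ {ω | ∀ j, 1 ≤ j → j ≤ m → X j ω = t j}
        = μ {ω | ∀ j, 1 ≤ j → j ≤ m → X (j + k) ω = t j})
    (u v : ℕ) :
    μ {ω | ∀ j, u < j → j + 1 ≤ v → X j ω = true}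
      = μ {ω | ∀ j, 1 ≤ j → j + 1 ≤ v - u → X j ω = true} := by
  have h := hstat u (v - u - 1) (fun _ => true)
  have e1 : {ω : Ω | ∀ j, 1 ≤ j → j ≤ v - u - 1 → X j ω = (fun _ => true) j}
      = {ω : Ω | ∀ j, 1 ≤ j → j + 1 ≤ v - u → X j ω = true} := by
    ext ω
    constructor
    · intro hω j hj1 hj2; exact hω j hj1 (by omega)
    · intro hω j hj1 hj2; exact hω j hj1 (by omega)
  have e2 : {ω : Ω | ∀ j, 1 ≤ j → j ≤ v - u - 1 → X (j + u) ω = (fun _ => true) j}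
      = {ω : Ω | ∀ j, u < j → j + 1 ≤ v → X j ω = true} := by
    ext ω
    constructor
    · intro hω j hj1 hj2
      have hju : j - u + u = j := by omega
      have := hω (j - u) (by omega) (by omega)
      rwa [hju] at this
    · intro hω j hj1 hj2
      exact hω (j + u) (by omega) (by omega)
  rw [e1, e2] at h
  exact h.symm

lemma prob_rec [IsProbabilityMeasure μ] (hmeas : ∀ i, Measurable (X i))
    (hdep : ∀ i : ℕ, IndepFun
        (fun ω => fun j : {j : ℕ // 1 ≤ j ∧ j < i} => X j.val ω)
        (fun ω => fun j : {j : ℕ // i < j} => X j.val ω) μ)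
    (k : ℕ) (s : ℕ → ℕ) (hs0 : s 0 = 0) (hm : ∀ i ≤ k + 1, s i < s (i + 1)) :
    μ (patSet X (k + 1) s) + μ (patSet X k (fun i => if i ≤ k then s i else s (i + 1)))
      = μ (patSet X k s) * μ {ω | ∀ j, s (k + 1) < j → j + 1 ≤ s (k + 2) → X j ω = true} := by
  set s' : ℕ → ℕ := fun i => if i ≤ k then s i else s (i + 1) with hs'
  have hlt := s_lt_of_lt hm
  have hsk1 : 1 ≤ s (k + 1) := by have := hlt (k + 1) 0 (by omega) (by omega); omega
  have h22 : s (k + 1 + 1) = s (k + 2) := rfl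
  have hskk : s (k + 1) < s (k + 2) := hm (k + 1) le_rfl
  have hsik : ∀ i, 1 ≤ i → i ≤ k → s i < s (k + 1) := fun i h1 h2 =>
    hlt (k + 1) i (by omega) (by omega)
  have hs'e : ∀ i, i ≤ k → s' i = s i := fun i h => if_pos h
  have hs'k1 : s' (k + 1) = s (k + 2) := if_neg (by omega)
  set C : Set Ω := {ω | ∀ j, 1 ≤ j → j + 1 ≤ s (k + 2) → j ≠ s (k + 1) →
      (X j ω = true ↔ ∀ i, 1 ≤ i → i ≤ k → s i ≠ j)} with hCdef
  have hAC : patSet X (k + 1) s = C ∩ (X (s (k + 1)) ⁻¹' {false}) := by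
    ext ω
    constructor
    · intro hω
      refine ⟨fun j hj1 hj2 hj3 => ?_, ?_⟩
      · have h4 := hω j hj1 hj2
        constructor
        · intro hx i hi1 hi2; exact h4.mp hx i hi1 (by omega)
        · intro hq
          refine h4.mpr fun i hi1 hi2 => ?_
          by_cases hik : i ≤ k
          · exact hq i hi1 hik
          · have hik1 : i = k + 1 := by omega
            subst hik1
            exact fun h => hj3 h.symm
      · have h4 := hω (s (k + 1)) hsk1 (by omega)
        have : X (s (k + 1)) ω ≠ true := fun hb =>
          absurd rfl (h4.mp hb (k + 1) (by omega) le_rfl)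
        simpa using this
    · rintro ⟨hC1, hb⟩
      intro j hj1 hj2
      have hbf : X (s (k + 1)) ω = false := hb
      by_cases hjs : j = s (k + 1)
      · constructor
        · intro hx
          rw [hjs, hbf] at hx
          exact absurd hx (by simp)
        · intro hq
          exact absurd hjs.symm (hq (k + 1) (by omega) le_rfl)
      · have h4 := hC1 j hj1 hj2 hjs
        constructor
        · intro hx i hi1 hi2
          by_cases hik : i ≤ k
          · exact h4.mp hx i hi1 hik
          · have hik1 : i = k + 1 := by omega
            subst hik1
            exact fun h => hjs h.symm
        · intro hq
          exact h4.mpr fun i hi1 hi2 => hq i hi1 (by omega)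
  have hBC : patSet X k s' = C ∩ (X (s (k + 1)) ⁻¹' {true}) := by
    ext ω
    constructor
    · intro hω
      refine ⟨fun j hj1 hj2 hj3 => ?_, ?_⟩
      · have h4 := hω j hj1 (by rw [hs'k1]; omega)
        constructor
        · intro hx i hi1 hi2
          have := h4.mp hx i hi1 hi2
          rwa [hs'e i hi2] at this
        · intro hq
          exact h4.mpr fun i hi1 hi2 => by rw [hs'e i hi2]; exact hq i hi1 hi2
      · have h4 := hω (s (k + 1)) hsk1 (by rw [hs'k1]; omega)
        have : X (s (k + 1)) ω = true := h4.mpr fun i hi1 hi2 => by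
          rw [hs'e i hi2]
          have := hsik i hi1 hi2; omega
        exact this
    · rintro ⟨hC1, hb⟩
      intro j hj1 hj2
      rw [hs'k1] at hj2
      have hbt : X (s (k + 1)) ω = true := hb
      by_cases hjs : j = s (k + 1)
      · subst hjs
        constructor
        · intro _ i hi1 hi2
          rw [hs'e i hi2]
          have := hsik i hi1 hi2; omega
        · intro _; exact hbt
      · have h4 := hC1 j hj1 hj2 hjs
        constructor
        · intro hx i hi1 hi2
          rw [hs'e i hi2]
          exact h4.mp hx i hi1 hi2
        · intro hq
          exact h4.mpr fun i hi1 hi2 => by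
            have := hq i hi1 hi2
            rwa [hs'e i hi2] at this
  have hdisj : Disjoint (patSet X (k + 1) s) (patSet X k s') := by
    rw [Set.disjoint_left]
    intro ω h1 h2
    rw [hAC] at h1
    rw [hBC] at h2
    have hb1 : X (s (k + 1)) ω = false := h1.2
    have hb2 : X (s (k + 1)) ω = true := h2.2
    rw [hb1] at hb2
    exact absurd hb2 (by simp)
  have hunion : patSet X (k + 1) s ∪ patSet X k s' = C := by
    rw [hAC, hBC]
    ext ω
    constructor
    · rintro (⟨h, _⟩ | ⟨h, _⟩) <;> exact h
    · intro h
      cases hb : X (s (k + 1)) ω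
      · exact Or.inl ⟨h, hb⟩
      · exact Or.inr ⟨h, hb⟩
  have hadd : μ (patSet X (k + 1) s) + μ (patSet X k s') = μ C := by
    rw [← measure_union hdisj (measurableSet_patSet X hmeas _ _), hunion]
  have hC12 : C = patSet X k s ∩ {ω | ∀ j, s (k + 1) < j → j + 1 ≤ s (k + 2) → X j ω = true} := by
    ext ω
    constructor
    · intro h
      refine ⟨fun j hj1 hj2 => ?_, fun j hj1 hj2 => ?_⟩
      · exact h j hj1 (by omega) (by omega)
      · exact (h j (by omega) hj2 (by omega)).mpr fun i hi1 hi2 => by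
          have := hsik i hi1 hi2; omega
    · rintro ⟨h1, h2⟩ j hj1 hj2 hj3
      by_cases hlt2 : j < s (k + 1)
      · exact h1 j hj1 (by omega)
      · have hgt : s (k + 1) < j := by omega
        constructor
        · intro _ i hi1 hi2
          have := hsik i hi1 hi2; omega
        · intro _; exact h2 j hgt hj2
  rw [hadd, hC12]
  exact indep_split μ X hdep (s (k + 1)) (s (k + 2)) _

lemma det_rec (a : ℕ → ℝ) (ha0 : a 0 = 1) (k : ℕ) (s s' : ℕ → ℕ)
    (hm : ∀ i ≤ k + 1, s i < s (i + 1))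
    (hs'e : ∀ i ≤ k, s' i = s i) (hs'k : s' (k + 1) = s (k + 2)) :
    (Matrix.of fun i j : Fin (k + 1 + 1) =>
        if s i.val ≤ s (j.val + 1) then a (s (j.val + 1) - s i.val) else 0).det
    = a (s (k + 2) - s (k + 1)) * (Matrix.of fun i j : Fin (k + 1) =>
        if s i.val ≤ s (j.val + 1) then a (s (j.val + 1) - s i.val) else 0).det
      - (Matrix.of fun i j : Fin (k + 1) =>
          if s' i.val ≤ s' (j.val + 1) then a (s' (j.val + 1) - s' i.val) else 0).det := by
  have hlt := s_lt_of_lt hm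
  rw [Matrix.det_succ_row _ (Fin.last (k + 1)), Fin.sum_univ_castSucc, Fin.sum_univ_castSucc]
  have hz : (∑ j : Fin k,
      (-1 : ℝ) ^ ((Fin.last (k + 1)).val + ((j.castSucc.castSucc : Fin (k + 2))).val)
        * (Matrix.of fun i j : Fin (k + 2) =>
            if s i.val ≤ s (j.val + 1) then a (s (j.val + 1) - s i.val) else 0)
            (Fin.last (k + 1)) (j.castSucc.castSucc)
        * ((Matrix.of fun i j : Fin (k + 2) =>
            if s i.val ≤ s (j.val + 1) then a (s (j.val + 1) - s i.val) else 0).submatrix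
            (Fin.last (k + 1)).succAbove (j.castSucc.castSucc).succAbove).det) = 0 := by
    refine Finset.sum_eq_zero fun j _ => ?_
    have hj : ((j.castSucc.castSucc : Fin (k + 2))).val = j.val := rfl
    have hentry : (Matrix.of fun i j : Fin (k + 2) =>
        if s i.val ≤ s (j.val + 1) then a (s (j.val + 1) - s i.val) else 0)
        (Fin.last (k + 1)) (j.castSucc.castSucc) = 0 := by
      simp only [Matrix.of_apply, hj]
      rw [if_neg]
      have : s (j.val + 1) < s (k + 1) := hlt (k + 1) (j.val + 1) (by omega) (by omega)
      simp only [Fin.val_last]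
      omega
    rw [hentry]
    ring
  rw [hz]
  rw [zero_add]
  have hsign1 : ((-1 : ℝ)) ^ ((Fin.last (k + 1)).val + ((Fin.last k).castSucc : Fin (k + 2)).val)
      = -1 := by
    simp only [Fin.val_last, Fin.coe_castSucc]
    have h2 : k + 1 + k = 2 * k + 1 := by ring
    rw [h2]
    exact Odd.neg_one_pow ⟨k, by ring⟩
  have hsign2 : ((-1 : ℝ)) ^ ((Fin.last (k + 1)).val + (Fin.last (k + 1)).val) = 1 := by
    simp only [Fin.val_last]
    exact Even.neg_one_pow ⟨k + 1, by ring⟩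
  have hentry1 : (Matrix.of fun i j : Fin (k + 2) =>
      if s i.val ≤ s (j.val + 1) then a (s (j.val + 1) - s i.val) else 0)
      (Fin.last (k + 1)) ((Fin.last k).castSucc) = 1 := by
    simp only [Matrix.of_apply, Fin.val_last, Fin.coe_castSucc]
    rw [if_pos le_rfl, Nat.sub_self, ha0]
  have hentry2 : (Matrix.of fun i j : Fin (k + 2) =>
      if s i.val ≤ s (j.val + 1) then a (s (j.val + 1) - s i.val) else 0)
      (Fin.last (k + 1)) (Fin.last (k + 1)) = a (s (k + 2) - s (k + 1)) := by
    simp only [Matrix.of_apply, Fin.val_last]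
    rw [if_pos (le_of_lt (hm (k + 1) le_rfl))]
  have hmat2 : ((Matrix.of fun i j : Fin (k + 2) =>
      if s i.val ≤ s (j.val + 1) then a (s (j.val + 1) - s i.val) else 0).submatrix
      (Fin.last (k + 1)).succAbove (Fin.last (k + 1)).succAbove)
      = Matrix.of fun i j : Fin (k + 1) =>
          if s i.val ≤ s (j.val + 1) then a (s (j.val + 1) - s i.val) else 0 := by
    ext i j
    simp [Matrix.submatrix_apply, Fin.succAbove_last]
  have hmat1 : ((Matrix.of fun i j : Fin (k + 2) =>
      if s i.val ≤ s (j.val + 1) then a (s (j.val + 1) - s i.val) else 0).submatrix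
      (Fin.last (k + 1)).succAbove ((Fin.last k).castSucc : Fin (k + 2)).succAbove)
      = Matrix.of fun i j : Fin (k + 1) =>
          if s' i.val ≤ s' (j.val + 1) then a (s' (j.val + 1) - s' i.val) else 0 := by
    ext i j
    have hrow : (Fin.last (k + 1)).succAbove i = i.castSucc := by rw [Fin.succAbove_last]
    have hi : s' i.val = s i.val := hs'e i.val (by omega)
    by_cases h : j.val < k
    · have hcol : ((Fin.last k).castSucc : Fin (k + 2)).succAbove j = j.castSucc := by
        apply Fin.succAbove_of_castSucc_lt
        simp [Fin.lt_def, h]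
      have hj1 : s' (j.val + 1) = s (j.val + 1) := hs'e _ (by omega)
      simp only [Matrix.submatrix_apply, hrow, hcol, Matrix.of_apply, Fin.coe_castSucc,
        hi, hj1]
    · have hjk : j.val = k := by omega
      have hcol : ((Fin.last k).castSucc : Fin (k + 2)).succAbove j = j.succ := by
        apply Fin.succAbove_of_le_castSucc
        simp [Fin.le_def, hjk]
      have hj1 : s' (j.val + 1) = s (j.val + 1 + 1) := by
        rw [hjk, hs'k]
      simp only [Matrix.submatrix_apply, hrow, hcol, Matrix.of_apply, Fin.coe_castSucc,
        Fin.val_succ, hi, hj1]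
  rw [hsign1, hsign2, hentry1, hentry2, hmat1, hmat2]
  ring

lemma aFun_zero [IsProbabilityMeasure μ] : aFun μ X 0 = 1 := by
  unfold aFun
  have h : {ω : Ω | ∀ j, 1 ≤ j → j + 1 ≤ 0 → X j ω = true} = Set.univ := by
    ext ω; simp only [Set.mem_setOf_eq, Set.mem_univ, iff_true]
    intro j h1 h2; omega
  rw [h, measure_univ, ENNReal.toReal_one]

lemma key [IsProbabilityMeasure μ] (hmeas : ∀ i, Measurable (X i))
    (hstat : ∀ (k m : ℕ) (t : ℕ → Bool),
      μ {ω | ∀ j, 1 ≤ j → j ≤ m → X j ω = t j}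
        = μ {ω | ∀ j, 1 ≤ j → j ≤ m → X (j + k) ω = t j})
    (hdep : ∀ i : ℕ, IndepFun
        (fun ω => fun j : {j : ℕ // 1 ≤ j ∧ j < i} => X j.val ω)
        (fun ω => fun j : {j : ℕ // i < j} => X j.val ω) μ) :
    ∀ (k : ℕ) (s : ℕ → ℕ), s 0 = 0 → (∀ i ≤ k, s i < s (i + 1)) →
    (μ (patSet X k s)).toReal
      = (Matrix.of fun i j : Fin (k + 1) =>
          if s i.val ≤ s (j.val + 1) then aFun μ X (s (j.val + 1) - s i.val) else 0).det := by
  intro k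
  induction k with
  | zero =>
    intro s hs0 hmono
    rw [Matrix.det_fin_one]
    simp only [Matrix.of_apply]
    have h0 : ((0 : Fin 1) : ℕ) = 0 := rfl
    rw [h0, hs0]
    rw [if_pos (Nat.zero_le _), Nat.sub_zero]
    have hps : patSet X 0 s = {ω : Ω | ∀ j, 1 ≤ j → j + 1 ≤ s (0 + 1) → X j ω = true} := by
      ext ω
      constructor
      · intro h j h1 h2
        exact (h j h1 h2).mpr fun i hi1 hi0 => by omega
      · intro h j h1 h2
        constructor
        · intro _ i hi1 hi0; omega
        · intro _; exact h j h1 h2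
    rw [hps]
    rfl
  | succ k ih =>
    intro s hs0 hmono
    set s' : ℕ → ℕ := fun i => if i ≤ k then s i else s (i + 1) with hs'def
    have hs'0 : s' 0 = 0 := by rw [hs'def]; simp [hs0]
    have hs'e : ∀ i, i ≤ k → s' i = s i := fun i h => if_pos h
    have hs'k1 : s' (k + 1) = s (k + 2) := if_neg (by omega)
    have hs'mono : ∀ i ≤ k, s' i < s' (i + 1) := by
      intro i hi
      by_cases h : i < k
      · rw [hs'e i (by omega), hs'e (i + 1) (by omega)]
        exact hmono i (by omega)
      · have hik : i = k := by omega
        subst hik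
        rw [hs'e i le_rfl, hs'k1]
        exact lt_trans (hmono i (by omega)) (hmono (i + 1) (by omega))
    have haf0 : aFun μ X 0 = 1 := aFun_zero μ X
    have hrec := congrArg ENNReal.toReal (prob_rec μ X hmeas hdep k s hs0 hmono)
    rw [← hs'def] at hrec
    rw [ENNReal.toReal_add (measure_ne_top μ _) (measure_ne_top μ _), ENNReal.toReal_mul] at hrec
    have hc2 : (μ {ω | ∀ j, s (k + 1) < j → j + 1 ≤ s (k + 2) → X j ω = true}).toReal
        = aFun μ X (s (k + 2) - s (k + 1)) := by
      rw [shift_ones μ X hstat (s (k + 1)) (s (k + 2))]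
      rfl
    rw [hc2, ih s hs0 (fun i hi => hmono i (by omega)), ih s' hs'0 hs'mono] at hrec
    rw [det_rec (aFun μ X) haf0 k s s' hmono hs'e hs'k1]
    linarith [hrec]

end OneDep

/-- For a stationary one-dependent binary process, the probability of observing the binary
string `t_1, …, t_{n-1}`, whose zeros are exactly at positions `s 1 < … < s k`
(with `s 0 = 0`, `s (k+1) = n`), equals `det (a_{s_{j+1} - s_i})_{i,j=0}^k`,
where `a_m = 0` for `m < 0` (the `if`-clause) and `a_0 = 1`. -/
theorem one_dependent_pattern_det {Ω : Type*} [MeasurableSpace Ω] (μ : Measure Ω)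
    [IsProbabilityMeasure μ] (X : ℕ → Ω → Bool) (hmeas : ∀ i, Measurable (X i))
    (hstat : ∀ (k m : ℕ) (t : ℕ → Bool),
      μ {ω | ∀ j, 1 ≤ j → j ≤ m → X j ω = t j}
        = μ {ω | ∀ j, 1 ≤ j → j ≤ m → X (j + k) ω = t j})
    (hdep : ∀ i : ℕ, IndepFun
        (fun ω => fun j : {j : ℕ // 1 ≤ j ∧ j < i} => X j.val ω)
        (fun ω => fun j : {j : ℕ // i < j} => X j.val ω) μ)
    (n k : ℕ) (s : ℕ → ℕ) (t : ℕ → Bool)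
    (hs0 : s 0 = 0) (hsn : s (k + 1) = n)
    (hmono : ∀ i ≤ k, s i < s (i + 1))
    (ht : ∀ j, 1 ≤ j → j ≤ n - 1 → (t j = false ↔ ∃ i, 1 ≤ i ∧ i ≤ k ∧ s i = j)) :
    (μ {ω | ∀ j, 1 ≤ j → j ≤ n - 1 → X j ω = t j}).toReal
      = Matrix.det (Matrix.of fun i j : Fin (k + 1) =>
          if s i.val ≤ s (j.val + 1) then aFun μ X (s (j.val + 1) - s i.val) else 0) := by
  have hlt := s_lt_of_lt hmono
  have hn1 : 1 ≤ n := by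
    have := hlt (k + 1) 0 (by omega) (by omega)
    omega
  have hsn' : s (k + 1) = n := hsn
  have hset : {ω : Ω | ∀ j, 1 ≤ j → j ≤ n - 1 → X j ω = t j} = patSet X k s := by
    ext ω
    constructor
    · intro h j hj1 hj2
      have h5 := h j hj1 (by omega)
      have h6 := ht j hj1 (by omega)
      constructor
      · intro hx i hi1 hi2 hsij
        have htf : t j = false := h6.mpr ⟨i, hi1, hi2, hsij⟩
        rw [h5, htf] at hx
        exact Bool.noConfusion hx
      · intro hq
        cases htj : t j with
        | false =>
          rcases h6.mp htj with ⟨i, hi1, hi2, hij⟩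
          exact absurd hij (hq i hi1 hi2)
        | true =>
          rw [h5, htj]
    · intro h j hj1 hj2
      have h5 := h j hj1 (by omega)
      have h6 := ht j hj1 hj2
      cases htj : t j with
      | false =>
        rcases h6.mp htj with ⟨i, hi1, hi2, hij⟩
        cases hx : X j ω with
        | false => rfl
        | true => exact absurd hij (h5.mp hx i hi1 hi2)
      | true =>
        exact h5.mpr fun i hi1 hi2 hij => by
          have htf : t j = false := h6.mpr ⟨i, hi1, hi2, hij⟩
          rw [htj] at htf
          exact Bool.noConfusion htf
  rw [hset]
  exact key μ X hmeas hstat hdep k s hs0 hmono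
end

section
/- Any stationary one-dependent binary process is invariant under time reversal: P(X_1=t_1, ..., X_n=t_n) = P(X_1=t_n, ..., X_n=t_1) for all binary strings (t_1,...,t_n). -/
/-!
Cutting a binary word at an occurrence of `1`, stationarity and one-dependence give
`P(u1v) + P(u0v) = P(u) P(v)`. Writing `w̃` for the reversed word, `u1v` reverses to `ṽ1ũ`,
so by induction on the number of ones `P(w̃) = P(w)`: the words `u`, `v` and `u0v` have fewer
ones, and a word without ones is a palindrome.
-/

open MeasureTheory ProbabilityTheory

namespace OneDependentProcess

variable {Ω α : Type*}

def wordEvent (X : ℕ → Ω → α) (k : ℕ) (w : List α) : Set Ω :=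
  (fun ω (i : Fin w.length) => X (k + i) ω) ⁻¹' {fun i => w[i]}

def IsStationary [MeasurableSpace Ω] (μ : Measure Ω) (X : ℕ → Ω → α) : Prop :=
  ∀ (k m : ℕ) (t : ℕ → α),
    μ {ω | ∀ j, 1 ≤ j → j ≤ m → X j ω = t j} = μ {ω | ∀ j, 1 ≤ j → j ≤ m → X (j + k) ω = t j}

def IsOneDependent [MeasurableSpace Ω] [MeasurableSpace α] (μ : Measure Ω) (X : ℕ → Ω → α) :
    Prop :=
  ∀ i : ℕ, IndepFun (fun ω (j : {j : ℕ // 1 ≤ j ∧ j < i}) => X j ω)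
    (fun ω (j : {j : ℕ // i < j}) => X j ω) μ

section

variable {X : ℕ → Ω → α}

theorem mem_wordEvent {k : ℕ} {w : List α} {ω : Ω} :
    ω ∈ wordEvent X k w ↔ ∀ i (hi : i < w.length), X (k + i) ω = w[i] := by
  simp [wordEvent, funext_iff, Fin.forall_iff]

@[simp]
theorem wordEvent_nil (k : ℕ) : wordEvent X k [] = Set.univ := by
  ext ω
  simp [mem_wordEvent]

theorem wordEvent_append (k : ℕ) (u v : List α) :
    wordEvent X k (u ++ v) = wordEvent X k u ∩ wordEvent X (k + u.length) v := by
  ext ω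
  simp only [mem_wordEvent, Set.mem_inter_iff, List.length_append]
  constructor
  · intro h
    refine ⟨fun i hi => ?_, fun i hi => ?_⟩
    · simpa [List.getElem_append_left hi] using h i (by omega)
    · simpa [add_assoc] using h (u.length + i) (by omega)
  · rintro ⟨hu, hv⟩ i hi
    rcases lt_or_ge i u.length with h | h
    · simpa [List.getElem_append_left h] using hu i h
    · obtain ⟨i, rfl⟩ := Nat.exists_eq_add_of_le h
      simpa [add_assoc] using hv i (by omega)

theorem wordEvent_singleton (k : ℕ) (a : α) : wordEvent X k [a] = X k ⁻¹' {a} := by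
  ext ω
  simp [mem_wordEvent]

theorem setOf_eq_wordEvent (k n : ℕ) (t : ℕ → α) :
    {ω | ∀ j, 1 ≤ j → j ≤ n → X (j + k) ω = t j}
      = wordEvent X (k + 1) (List.ofFn fun i : Fin n => t (i + 1)) := by
  ext ω
  simp only [Set.mem_ofPred_eq, mem_wordEvent, List.length_ofFn, List.getElem_ofFn]
  constructor
  · intro h i _
    simpa [add_comm, add_left_comm] using h (i + 1) (by omega) (by omega)
  · intro h j hj1 hj2
    obtain ⟨i, rfl⟩ := Nat.exists_eq_add_of_le' hj1
    simpa [add_comm, add_left_comm] using h i (by omega)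

theorem reverse_ofFn_add_one (n : ℕ) (t : ℕ → α) :
    (List.ofFn fun i : Fin n => t (i + 1)).reverse
      = List.ofFn fun i : Fin n => t (n + 1 - (i + 1)) := by
  refine List.ext_getElem (by simp) fun i h₁ h₂ => ?_
  simp only [List.getElem_reverse, List.getElem_ofFn, List.length_ofFn]
  congr 1
  simp at h₂
  omega

end

variable [MeasurableSpace Ω] {μ : Measure Ω}

section

variable {X : ℕ → Ω → α}

theorem IsStationary.measure_wordEvent_shift (hX : IsStationary μ X) (k : ℕ) (w : List α) :
    μ (wordEvent X (k + 1) w) = μ (wordEvent X 1 w) := by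
  rcases w with _ | ⟨a, w⟩
  · simp
  have hw : (List.ofFn fun i : Fin (a :: w).length => (a :: w)[i.1]?.getD a) = a :: w := by
    simp
  have h := hX k (a :: w).length fun j => (a :: w)[j - 1]?.getD a
  have h0 := setOf_eq_wordEvent (X := X) 0 (a :: w).length fun j => (a :: w)[j - 1]?.getD a
  simp only [add_zero, zero_add] at h0
  rw [h0, setOf_eq_wordEvent] at h
  simp only [add_tsub_cancel_right, hw] at h
  exact h.symm

theorem IsOneDependent.measure_wordEvent_inter [MeasurableSpace α] [MeasurableSingletonClass α]
    (hX : IsOneDependent μ X) (u v : List α) :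
    μ (wordEvent X 1 u ∩ wordEvent X (u.length + 1 + 1) v)
      = μ (wordEvent X 1 u) * μ (wordEvent X (u.length + 1 + 1) v) := by
  have hpast : Measurable fun (g : {j : ℕ // 1 ≤ j ∧ j < u.length + 1} → α) (i : Fin u.length) =>
      g ⟨1 + i, by omega, by omega⟩ :=
    measurable_pi_lambda _ fun _ => measurable_pi_apply _
  have hfuture : Measurable fun (g : {j : ℕ // u.length + 1 < j} → α) (i : Fin v.length) =>
      g ⟨u.length + 2 + i, by omega⟩ :=
    measurable_pi_lambda _ fun _ => measurable_pi_apply _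
  exact ((hX (u.length + 1)).comp hpast hfuture).measure_inter_preimage_eq_mul _ _
    (measurableSet_singleton _) (measurableSet_singleton _)

end

section

variable {X : ℕ → Ω → Bool}

theorem measure_wordEvent_true_add_false (hX : ∀ i, Measurable (X i)) (k : ℕ) (u v : List Bool) :
    μ (wordEvent X k (u ++ true :: v)) + μ (wordEvent X k (u ++ false :: v))
      = μ (wordEvent X k u ∩ wordEvent X (k + u.length + 1) v) := by
  have hsplit : ∀ b, wordEvent X k (u ++ b :: v)
      = (wordEvent X k u ∩ wordEvent X (k + u.length + 1) v) ∩ X (k + u.length) ⁻¹' {b} := by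
    intro b
    rw [← List.singleton_append, wordEvent_append, wordEvent_append, wordEvent_singleton,
      List.length_singleton]
    ac_rfl
  have hfalse : X (k + u.length) ⁻¹' {false} = (X (k + u.length) ⁻¹' {true})ᶜ := by
    ext ω
    simp
  rw [hsplit, hsplit, hfalse, ← Set.sdiff_eq,
    measure_inter_add_sdiff _ (hX _ (measurableSet_singleton _))]

theorem measure_wordEvent_true_add_false_eq_mul (hX : ∀ i, Measurable (X i))
    (hstat : IsStationary μ X) (hdep : IsOneDependent μ X) (u v : List Bool) :
    μ (wordEvent X 1 (u ++ true :: v)) + μ (wordEvent X 1 (u ++ false :: v))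
      = μ (wordEvent X 1 u) * μ (wordEvent X 1 v) := by
  rw [measure_wordEvent_true_add_false hX, add_comm 1, hdep.measure_wordEvent_inter,
    hstat.measure_wordEvent_shift (u.length + 1)]

theorem measure_wordEvent_reverse [IsFiniteMeasure μ] (hX : ∀ i, Measurable (X i))
    (hstat : IsStationary μ X) (hdep : IsOneDependent μ X) (w : List Bool) :
    μ (wordEvent X 1 w.reverse) = μ (wordEvent X 1 w) := by
  by_cases hw : true ∈ w
  · obtain ⟨u, v, rfl⟩ := List.append_of_mem hw
    have hu := measure_wordEvent_reverse hX hstat hdep u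
    have hv := measure_wordEvent_reverse hX hstat hdep v
    have hflip := measure_wordEvent_reverse hX hstat hdep (u ++ false :: v)
    have hrev := measure_wordEvent_true_add_false_eq_mul hX hstat hdep v.reverse u.reverse
    simp only [List.reverse_append, List.reverse_cons, List.append_assoc, List.singleton_append]
      at hflip ⊢
    rw [hflip, hu, hv, mul_comm,
      ← measure_wordEvent_true_add_false_eq_mul hX hstat hdep u v] at hrev
    exact (ENNReal.add_left_inj (measure_ne_top _ _)).mp hrev
  · have : w = List.replicate w.length false :=
      List.eq_replicate_iff.mpr ⟨rfl, fun b hb => by simpa using ne_of_mem_of_not_mem hb hw⟩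
    rw [this, List.reverse_replicate]
termination_by w.count true
decreasing_by all_goals subst_vars; simp [List.count_append] <;> omega

end

end OneDependentProcess

/-- A stationary one-dependent binary process is invariant under time reversal:
`P(X_1 = t_1, …, X_n = t_n) = P(X_1 = t_n, …, X_n = t_1)`. -/
theorem one_dependent_time_reversal {Ω : Type*} [MeasurableSpace Ω] (μ : Measure Ω)
    [IsProbabilityMeasure μ] (X : ℕ → Ω → Bool) (hmeas : ∀ i, Measurable (X i))
    (hstat : ∀ (k m : ℕ) (t : ℕ → Bool),
      μ {ω | ∀ j, 1 ≤ j → j ≤ m → X j ω = t j}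
        = μ {ω | ∀ j, 1 ≤ j → j ≤ m → X (j + k) ω = t j})
    (hdep : ∀ i : ℕ, IndepFun
        (fun ω => fun j : {j : ℕ // 1 ≤ j ∧ j < i} => X j.val ω)
        (fun ω => fun j : {j : ℕ // i < j} => X j.val ω) μ)
    (n : ℕ) (t : ℕ → Bool) :
    μ {ω | ∀ j, 1 ≤ j → j ≤ n → X j ω = t j}
      = μ {ω | ∀ j, 1 ≤ j → j ≤ n → X j ω = t (n + 1 - j)} := by
  have hword : ∀ s : ℕ → Bool, {ω | ∀ j, 1 ≤ j → j ≤ n → X j ω = s j}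
      = OneDependentProcess.wordEvent X 1 (List.ofFn fun i : Fin n => s (i + 1)) :=
    OneDependentProcess.setOf_eq_wordEvent 0 n
  rw [hword, hword, ← OneDependentProcess.reverse_ofFn_add_one,
    OneDependentProcess.measure_wordEvent_reverse hmeas hstat hdep]
end

section
/- Let ρ be the correlation function of a one-dependent point process on a segment of ℤ, i.e., ρ(A) = P(S ⊇ A), and suppose ρ(X ∪ Y) = ρ(X)ρ(Y) whenever the distance between finite sets X and Y is at least 2. Define K(x,y) = 0 if x - y ≥ 2, K(x,y) = -1 if x - y = 1, and for x ≤ y, K(x,y) = Σ_{r=1}^{y-x+1} (-1)^{r-1} Σ_{x = l_0 < l_1 < ... < l_r = y+1} ρ([l_0,l_1)) ρ([l_1,l_2)) ··· ρ([l_{r-1}, l_r)). Then for all x ≤ y, det(K(x+i, x+j))_{i,j=0}^{y-x} = ρ([x, y+1)), and consequently ρ(A) = det(K(a,a'))_{a,a' ∈ A} for every finite A (the process is determinantal). -/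
/-! Splitting a chain at its first interior point turns the chain expansion of `K` into the
renewal identity `∑_{m ∈ [x, y]} ρ([x, m)) K(m, y) = ρ([x, y + 1))`. The matrix
`(K(x + i, x + j))_{i,j ≤ d}` is upper Hessenberg with subdiagonal `-1`; adding to its first row the
rows weighted by `ρ([x, x + k))` leaves, by the renewal identity, the single entry `ρ([x, x + d + 1))`
in the last column, and the complementary minor is triangular with diagonal `-1`. A finite set
with a gap splits there into two parts at distance at least 2: `ρ` factors by one-dependence and
the determinant factors because `K(c, b) = 0` for `c ≥ b + 2`. -/

open MeasureTheory

/-- Given a chain `x = l_0 < l_1 < ⋯ < l_r = y+1` whose interior points form the finite set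
`L ⊆ [x+1, y]`, `chainProd ρ x y L` is the product `ρ([l_0,l_1)) ρ([l_1,l_2)) ⋯ ρ([l_{r-1},l_r))`. -/
noncomputable def chainProd (ρ : Finset ℤ → ℝ) (x y : ℤ) (L : Finset ℤ) : ℝ :=
  let l := Finset.sort (insert x (insert (y + 1) L)) (· ≤ ·)
  ((l.zip l.tail).map (fun p => ρ (Finset.Ico p.1 p.2))).prod

open Finset Matrix

theorem Finset.sum_powerset_eq_add_sum_min {α M : Type*} [LinearOrder α] [AddCommMonoid M]
    (s : Finset α) (f : Finset α → M) :
    ∑ t ∈ s.powerset, f t =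
      f ∅ + ∑ m ∈ s, ∑ t ∈ (s.filter (m < ·)).powerset, f (insert m t) := by
  induction s using Finset.induction_on_min with
  | empty => simp
  | insert a s ha ih =>
    have has : a ∉ s := fun h => lt_irrefl a (ha a h)
    have hfa : (insert a s).filter (a < ·) = s := by
      rw [filter_insert, if_neg (lt_irrefl a), filter_true_of_mem ha]
    have hfm : ∀ m ∈ s, (insert a s).filter (m < ·) = s.filter (m < ·) := fun m hm => by
      rw [filter_insert, if_neg (ha m hm).not_gt]
    have hrest : ∑ m ∈ s, ∑ t ∈ ((insert a s).filter (m < ·)).powerset, f (insert m t)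
        = ∑ m ∈ s, ∑ t ∈ (s.filter (m < ·)).powerset, f (insert m t) :=
      sum_congr rfl fun m hm => by rw [hfm m hm]
    rw [sum_powerset_insert has, ih, sum_insert has, hfa, hrest]
    abel

theorem Finset.sort_insert_of_forall_lt {α : Type*} [LinearOrder α] {a : α} {s : Finset α}
    (h : ∀ b ∈ s, a < b) :
    (insert a s).sort (· ≤ ·) = a :: s.sort (· ≤ ·) :=
  sort_insert (· ≤ ·) (fun b hb => (h b hb).le) fun ha => lt_irrefl a (h a ha)

theorem Matrix.det_eq_vecMul_last_of_upperHessenberg {R : Type*} [CommRing R] {d : ℕ}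
    (M : Matrix (Fin (d + 1)) (Fin (d + 1)) R)
    (hzero : ∀ i j : Fin (d + 1), j.val + 2 ≤ i.val → M i j = 0)
    (hsub : ∀ i : Fin d, M i.succ i.castSucc = -1)
    (v : Fin (d + 1) → R) (hv0 : v 0 = 1) (hv : ∀ j ≠ Fin.last d, (v ᵥ* M) j = 0) :
    M.det = (v ᵥ* M) (Fin.last d) := by
  have hminor : (M.submatrix Fin.succ Fin.castSucc).det = (-1) ^ d := by
    rw [det_of_isUpperTriangular]
    · simp only [submatrix_apply, hsub, prod_const, card_univ, Fintype.card_fin]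
    · intro i j hji
      exact hzero _ _ (by simp only [Fin.val_succ, Fin.val_castSucc]; exact Nat.succ_le_succ hji)
  rw [← one_smul R M.det, ← hv0, ← det_updateRow_sum, ← vecMul_eq_sum, det_succ_row_zero,
    sum_eq_single (Fin.last d) (fun j _ hj => by rw [updateRow_self, hv j hj]; ring) (by simp)]
  simp only [updateRow_self, Fin.succAbove_last, Fin.val_last]
  rw [← Fin.succAbove_zero, submatrix_updateRow_succAbove, Fin.succAbove_zero, hminor,
    mul_right_comm, ← pow_add, Even.neg_one_pow ⟨d, rfl⟩, one_mul]

def finIccEquiv (x : ℤ) (d : ℕ) : Fin (d + 1) ≃ Icc x (x + d) where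
  toFun i := ⟨x + i, mem_Icc.2 ⟨by omega, by omega⟩⟩
  invFun a := ⟨(a.1 - x).toNat, by have := mem_Icc.1 a.2; omega⟩
  left_inv i := by ext; simp
  right_inv a := by ext; have := mem_Icc.1 a.2; simp; omega

theorem sum_fin_eq_sum_Icc {M : Type*} [AddCommMonoid M] (f : ℤ → M) (x : ℤ) (d : ℕ) :
    ∑ i : Fin (d + 1), f (x + i) = ∑ m ∈ Icc x (x + d), f m := by
  rw [← sum_coe_sort (Icc x (x + d))]
  exact Fintype.sum_equiv (finIccEquiv x d) (fun i => f (x + i)) (fun m => f m) fun _ => rfl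

theorem Matrix.det_toSquareBlockProp_of_finset {α R : Type*} [DecidableEq α] [CommRing R]
    (K : α → α → R) (A : Finset α) (p : α → Prop) [DecidablePred p] :
    (toSquareBlockProp (of fun a b : A => K a b) fun a => p a).det
      = (of fun a b : A.filter p => K a b).det := by
  let e : A.filter p ≃ {a : A // p a} :=
    { toFun a := ⟨⟨a, (mem_filter.1 a.2).1⟩, (mem_filter.1 a.2).2⟩
      invFun a := ⟨a.1, mem_filter.2 ⟨a.1.2, a.2⟩⟩
      left_inv _ := rfl
      right_inv _ := rfl }
  rw [← det_submatrix_equiv_self e]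
  rfl

theorem Matrix.det_of_finset_eq_mul_filter {α R : Type*} [DecidableEq α] [CommRing R]
    (K : α → α → R) (A : Finset α) (p : α → Prop) [DecidablePred p]
    (h : ∀ a ∈ A, ¬p a → ∀ b ∈ A, p b → K a b = 0) :
    (of fun a b : A => K a b).det
      = (of fun a b : A.filter p => K a b).det * (of fun a b : A.filter (¬p ·) => K a b).det := by
  rw [twoBlockTriangular_det (of fun a b : A => K a b) (fun a : A => p a)
    fun a ha b hb => h a a.2 ha b b.2 hb]
  exact congrArg₂ (· * ·) (det_toSquareBlockProp_of_finset K A p)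
    (det_toSquareBlockProp_of_finset K A (¬p ·))

theorem Finset.eq_Icc_min'_max'_of_ordConnected {α : Type*} [LinearOrder α]
    [LocallyFiniteOrder α] {A : Finset α} (hne : A.Nonempty) (hA : (A : Set α).OrdConnected) :
    A = Icc (A.min' hne) (A.max' hne) := by
  ext c
  refine ⟨fun hc => mem_Icc.2 ⟨A.min'_le c hc, A.le_max' c hc⟩, fun hc => ?_⟩
  exact hA.out (A.min'_mem hne) (A.max'_mem hne) (Set.mem_Icc.2 (mem_Icc.1 hc))

theorem chainProd_empty (ρ : Finset ℤ → ℝ) {x y : ℤ} (h : x ≤ y) :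
    chainProd ρ x y ∅ = ρ (Ico x (y + 1)) := by
  have hsort : (insert x {y + 1} : Finset ℤ).sort (· ≤ ·) = [x, y + 1] := by
    rw [sort_insert_of_forall_lt (by simp; omega), sort_singleton]
  simp [chainProd, hsort, List.zip]

theorem chainProd_insert (ρ : Finset ℤ → ℝ) {x m y : ℤ} {L : Finset ℤ}
    (hxm : x < m) (hmy : m ≤ y) (hL : ∀ a ∈ L, m < a) :
    chainProd ρ x y (insert m L) = ρ (Ico x m) * chainProd ρ m y L := by
  have hm : ∀ b ∈ insert (y + 1) L, m < b := by
    simp only [mem_insert, forall_eq_or_imp]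
    exact ⟨by omega, hL⟩
  have hx : ∀ b ∈ insert m (insert (y + 1) L), x < b := by
    simp only [mem_insert (s := insert (y + 1) L), forall_eq_or_imp]
    exact ⟨hxm, fun b hb => hxm.trans (hm b hb)⟩
  have hset : insert x (insert (y + 1) (insert m L)) = insert x (insert m (insert (y + 1) L)) := by
    rw [Finset.insert_comm (y + 1) m]
  simp only [chainProd, hset, sort_insert_of_forall_lt hx, sort_insert_of_forall_lt hm,
    List.zip, List.tail, List.zipWith_cons_cons, List.map_cons, List.prod_cons]

structure IsChainKernel (ρ : Finset ℤ → ℝ) (K : ℤ → ℤ → ℝ) : Prop where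
  eq_zero : ∀ x y, y + 2 ≤ x → K x y = 0
  succ_self : ∀ y, K (y + 1) y = -1
  eq_sum_chains : ∀ x y, x ≤ y → K x y =
    ∑ L ∈ (Icc (x + 1) y).powerset, (-1 : ℝ) ^ L.card * chainProd ρ x y L

namespace IsChainKernel

variable {ρ : Finset ℤ → ℝ} {K : ℤ → ℤ → ℝ}

theorem sum_Icc_mul_eq_rho (hK : IsChainKernel ρ K) (hρ : ρ ∅ = 1) {x y : ℤ} (hxy : x ≤ y) :
    ∑ m ∈ Icc x y, ρ (Ico x m) * K m y = ρ (Ico x (y + 1)) := by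
  have hfirst : ∀ m ∈ Icc (x + 1) y,
      ∑ L ∈ ((Icc (x + 1) y).filter (m < ·)).powerset,
        (-1 : ℝ) ^ (insert m L).card * chainProd ρ x y (insert m L) = -(ρ (Ico x m) * K m y) := by
    intro m hm
    rw [mem_Icc] at hm
    have hfilter : (Icc (x + 1) y).filter (m < ·) = Icc (m + 1) y := by
      ext a; simp only [mem_filter, mem_Icc]; omega
    rw [hfilter, hK.eq_sum_chains m y hm.2, mul_sum, ← sum_neg_distrib]
    refine sum_congr rfl fun L hL => ?_
    have hL' : ∀ a ∈ L, m < a := fun a ha => by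
      have := mem_Icc.mp (mem_powerset.mp hL ha); omega
    rw [card_insert_of_notMem fun h => lt_irrefl m (hL' m h),
      chainProd_insert ρ (by omega) hm.2 hL', pow_succ]
    ring
  have hK_xy := hK.eq_sum_chains x y hxy
  rw [sum_powerset_eq_add_sum_min, sum_congr rfl hfirst, sum_neg_distrib] at hK_xy
  rw [← insert_Icc_add_one_left_eq_Icc hxy, sum_insert (by simp), Ico_self, hρ, hK_xy,
    card_empty, pow_zero, one_mul, chainProd_empty ρ hxy]
  ring

theorem sum_Icc_mul_eq_zero (hK : IsChainKernel ρ K) (hρ : ρ ∅ = 1) {x y z : ℤ} (hxy : x ≤ y)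
    (hyz : y < z) : ∑ m ∈ Icc x z, ρ (Ico x m) * K m y = 0 := by
  have hsub : Icc x (y + 1) ⊆ Icc x z := Icc_subset_Icc le_rfl (by omega)
  rw [← sum_subset hsub fun m hm hm' => by
      rw [hK.eq_zero m y (by simp only [mem_Icc] at hm hm'; omega), mul_zero],
    ← insert_Icc_right_eq_Icc_add_one (by omega), sum_insert (by simp),
    hK.sum_Icc_mul_eq_rho hρ hxy, hK.succ_self]
  ring

theorem det_fin_eq_rho (hK : IsChainKernel ρ K) (hρ : ρ ∅ = 1) (x : ℤ) (d : ℕ) :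
    (of fun i j : Fin (d + 1) => K (x + i) (x + j)).det = ρ (Ico x (x + d + 1)) := by
  set M : Matrix (Fin (d + 1)) (Fin (d + 1)) ℝ := of fun i j => K (x + i) (x + j)
  set v : Fin (d + 1) → ℝ := fun k => ρ (Ico x (x + k))
  have hvecMul : ∀ j : Fin (d + 1), (v ᵥ* M) j = ∑ m ∈ Icc x (x + d), ρ (Ico x m) * K m (x + j) :=
    fun j => sum_fin_eq_sum_Icc (fun m => ρ (Ico x m) * K m (x + j)) x d
  have hsub (i : Fin d) : M i.succ i.castSucc = -1 := by
    simpa [M, add_assoc] using hK.succ_self (x + i)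
  have hv (j : Fin (d + 1)) (hj : j ≠ Fin.last d) : (v ᵥ* M) j = 0 := by
    rw [hvecMul]
    exact hK.sum_Icc_mul_eq_zero hρ (by omega) (by have := Fin.val_lt_last hj; omega)
  rw [det_eq_vecMul_last_of_upperHessenberg M (fun i j hij => hK.eq_zero _ _ (by omega)) hsub v
      (by simp [v, hρ]) hv, hvecMul, Fin.val_last, hK.sum_Icc_mul_eq_rho hρ (by omega)]

theorem det_Icc_eq_rho (hK : IsChainKernel ρ K) (hρ : ρ ∅ = 1) (x : ℤ) (d : ℕ) :
    (of fun a b : Icc x (x + d) => K a b).det = ρ (Icc x (x + d)) := by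
  rw [← det_submatrix_equiv_self (finIccEquiv x d)]
  exact (hK.det_fin_eq_rho hρ x d).trans (congrArg ρ (Ico_add_one_right_eq_Icc x (x + d)))

theorem rho_eq_det (hK : IsChainKernel ρ K) (hρ : ρ ∅ = 1)
    (hdep : ∀ X Y : Finset ℤ, (∀ x ∈ X, ∀ y ∈ Y, 2 ≤ |x - y|) → ρ (X ∪ Y) = ρ X * ρ Y)
    (A : Finset ℤ) : ρ A = (of fun a b : A => K a b).det := by
  induction A using Finset.strongInduction with | H A ih =>
  by_cases hconn : (A : Set ℤ).OrdConnected
  · rcases A.eq_empty_or_nonempty with rfl | hne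
    · simp [hρ]
    obtain ⟨d, hd⟩ : ∃ d : ℕ, A.max' hne = A.min' hne + d :=
      ⟨(A.max' hne - A.min' hne).toNat, by have := A.min'_le _ (A.max'_mem hne); omega⟩
    rw [eq_Icc_min'_max'_of_ordConnected hne hconn, hd, hK.det_Icc_eq_rho hρ]
  obtain ⟨a, ha, b, hb, -, g, ⟨hag, hgb⟩, hgA⟩ :
      ∃ a ∈ A, ∃ b ∈ A, a ≤ b ∧ ∃ g ∈ Set.Icc a b, g ∉ A := by
    simpa [Set.ordConnected_iff, Set.not_subset] using hconn
  have hag' : a < g := lt_of_le_of_ne hag fun h => hgA (h ▸ ha)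
  have hgb' : g < b := lt_of_le_of_ne hgb fun h => hgA (h.symm ▸ hb)
  have hsep : ∀ c ∈ A, ¬c < g → ∀ c' ∈ A, c' < g → c' + 2 ≤ c := fun c hc hcg c' _ hc'g => by
    have : c ≠ g := fun h => hgA (h ▸ hc)
    omega
  rw [det_of_finset_eq_mul_filter K A (· < g) fun c hc hcg c' hc' hc'g =>
      hK.eq_zero _ _ (hsep c hc hcg c' hc' hc'g),
    ← ih _ (filter_ssubset.2 ⟨b, hb, by omega⟩), ← ih _ (filter_ssubset.2 ⟨a, ha, by omega⟩),
    ← hdep, filter_union_filter_not_eq]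
  intro c' hc' c hc
  rw [mem_filter] at hc hc'
  have := hsep c hc.1 hc.2 c' hc'.1 hc'.2
  rw [abs_sub_comm, abs_of_nonneg (by omega)]
  omega

end IsChainKernel

theorem one_dependent_is_determinantal_general {Ω : Type*} [MeasurableSpace Ω] (μ : Measure Ω)
    [IsProbabilityMeasure μ] (S : Ω → Set ℤ)
    (ρ : Finset ℤ → ℝ)
    (hρ : ∀ A : Finset ℤ, ρ A = (μ {ω | ∀ a ∈ A, a ∈ S ω}).toReal)
    (hdep : ∀ X Y : Finset ℤ, (∀ x ∈ X, ∀ y ∈ Y, 2 ≤ |x - y|) → ρ (X ∪ Y) = ρ X * ρ Y)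
    (K : ℤ → ℤ → ℝ)
    (hK0 : ∀ x y, y + 2 ≤ x → K x y = 0)
    (hK1 : ∀ y, K (y + 1) y = -1)
    (hK2 : ∀ x y, x ≤ y → K x y =
      ∑ L ∈ (Finset.Icc (x + 1) y).powerset, (-1 : ℝ) ^ L.card * chainProd ρ x y L) :
    (∀ x y : ℤ, x ≤ y →
        Matrix.det (Matrix.of fun i j : Fin ((y - x + 1).toNat) =>
          K (x + i.val) (x + j.val)) = ρ (Finset.Ico x (y + 1))) ∧
    (∀ A : Finset ℤ, ρ A = Matrix.det (Matrix.of fun a a' : A => K a.val a'.val)) := by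
  have hK : IsChainKernel ρ K := ⟨hK0, hK1, hK2⟩
  have hρ0 : ρ ∅ = 1 := by simp [hρ]
  refine ⟨fun x y hxy => ?_, hK.rho_eq_det hρ0 hdep⟩
  obtain ⟨d, rfl⟩ : ∃ d : ℕ, y = x + d := ⟨(y - x).toNat, by omega⟩
  rw [show (x + d - x + 1).toNat = d + 1 by omega]
  exact hK.det_fin_eq_rho hρ0 x d

/-- Any one-dependent point process on ℤ is determinantal.  If `ρ(A) = P(S ⊇ A)` is the
correlation function, factorizing over sets at distance ≥ 2, and `K` is defined by
`K x y = 0` for `x - y ≥ 2`, `K x y = -1` for `x = y + 1`, and for `x ≤ y` by the signed sum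
over chains `x = l_0 < l_1 < ⋯ < l_r = y + 1` of `(-1)^{r-1} ∏ ρ([l_{i-1}, l_i))`
(encoded by the interior point sets `L`), then `det(K(x+i, x+j))_{i,j=0}^{y-x} = ρ([x, y+1))`
and `ρ(A) = det(K(a, a'))_{a,a' ∈ A}` for every finite `A`. -/
theorem one_dependent_is_determinantal {Ω : Type*} [MeasurableSpace Ω] (μ : Measure Ω)
    [IsProbabilityMeasure μ] (S : Ω → Set ℤ)
    (hSmeas : ∀ a : ℤ, MeasurableSet {ω | a ∈ S ω})
    (ρ : Finset ℤ → ℝ)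
    (hρ : ∀ A : Finset ℤ, ρ A = (μ {ω | ∀ a ∈ A, a ∈ S ω}).toReal)
    (hdep : ∀ X Y : Finset ℤ, (∀ x ∈ X, ∀ y ∈ Y, 2 ≤ |x - y|) → ρ (X ∪ Y) = ρ X * ρ Y)
    (K : ℤ → ℤ → ℝ)
    (hK0 : ∀ x y, y + 2 ≤ x → K x y = 0)
    (hK1 : ∀ y, K (y + 1) y = -1)
    (hK2 : ∀ x y, x ≤ y → K x y =
      ∑ L ∈ (Finset.Icc (x + 1) y).powerset, (-1 : ℝ) ^ L.card * chainProd ρ x y L) :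
    (∀ x y : ℤ, x ≤ y →
        Matrix.det (Matrix.of fun i j : Fin ((y - x + 1).toNat) =>
          K (x + i.val) (x + j.val)) = ρ (Finset.Ico x (y + 1))) ∧
    (∀ A : Finset ℤ, ρ A = Matrix.det (Matrix.of fun a a' : A => K a.val a'.val)) :=
  one_dependent_is_determinantal_general μ S ρ hρ hdep K hK0 hK1 hK2
end

section
/- For the Mallows measure on S_n with parameter q given by P_q(σ) = q^{inv(σ)} / [n]_q!, where inv(σ) is the number of inversions and [n]_q! = Π_{i=1}^n (1 + q + ... + q^{i-1}), the probability that σ has descent set exactly {s_1 < ... < s_k} equals det(1/[s_{j+1}-s_i]_q!)_{i,j=0}^k with s_0 = 0, s_{k+1} = n and 1/[m]_q! = 0 for m < 0. -/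
/-- The `q`-integer `[m]_q = 1 + q + ⋯ + q^{m-1}`. -/
def qint (q : ℝ) (m : ℕ) : ℝ := ∑ i ∈ Finset.range m, q ^ i

/-- The `q`-factorial `[m]_q! = ∏_{i=1}^m [i]_q`. -/
def qfact (q : ℝ) (m : ℕ) : ℝ := ∏ i ∈ Finset.Icc 1 m, qint q i

/-- The number of inversions of a permutation. -/
def inversions {n : ℕ} (σ : Equiv.Perm (Fin n)) : ℕ :=
  (Finset.univ.filter (fun p : Fin n × Fin n => p.1 < p.2 ∧ σ p.2 < σ p.1)).card

/-!
A permutation `σ` of `Fin (m + r)` is determined by the set `A` of its values on the first `m`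
positions and by the standardisations `τ`, `ρ` of its two blocks, and then
`inv σ = inv τ + inv ρ + cross A`, where `cross A` counts the pairs `y < x` with `x ∈ A` and
`y ∉ A`. Hence `[m + r]_q! = g(m, r) [m]_q! [r]_q!` with `g(m, r) = ∑_A q^{cross A}`; the case
`r = 1` identifies `∑_σ q^{inv σ}` with `[n]_q!`. The descents of `σ` below `m` are those of
`τ`, those above `m` are the shifted descents of `ρ`. So if `β_n(S)` is the `q^{inv}`-weight of
the permutations of `Fin n` with descent set `S` and `S ⊆ [1, m)`, then taking `ρ = 1` gives
`β_{m+r}(S ∪ {m}) + β_{m+r}(S) = g(m, r) β_m(S)`.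
The last row of the determinant `D_{k+1}(s)` has only two nonzero entries, and expanding along it
gives `D_{k+1}(s) = D_k(s) / [s_{k+2} - s_{k+1}]_q! - D_k(s')`, where `s'` is `s` with `s_{k+1}`
replaced by `s_{k+2}`. The two recursions match, so the theorem follows by induction on `k`.
-/

open Finset Equiv Function

section Shuffle

variable {m r : ℕ}

def crossings {n : ℕ} (A : Finset (Fin n)) : ℕ :=
  ∑ x ∈ A, ∑ y ∈ Aᶜ, if y < x then 1 else 0

lemma card_compl_of_card_eq {A : Finset (Fin (m + r))} (hA : #A = m) : #Aᶜ = r := by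
  simp [card_compl, hA]

noncomputable def shufflePerm (A : Finset (Fin (m + r))) (hA : #A = m)
    (τ : Perm (Fin m)) (ρ : Perm (Fin r)) : Perm (Fin (m + r)) :=
  Equiv.ofBijective
    (Fin.append (A.orderEmbOfFin hA ∘ τ) (Aᶜ.orderEmbOfFin (card_compl_of_card_eq hA) ∘ ρ))
    (Finite.injective_iff_bijective.mp <| Fin.append_injective_iff.mpr
      ⟨(A.orderEmbOfFin hA).injective.comp τ.injective,
        (Aᶜ.orderEmbOfFin _).injective.comp ρ.injective,
        fun i j h => mem_compl.mp (orderEmbOfFin_mem Aᶜ _ (ρ j))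
          (by simp only [Function.comp_apply] at h; exact h ▸ orderEmbOfFin_mem A hA (τ i))⟩)

section

variable {A : Finset (Fin (m + r))} (hA : #A = m) (τ : Perm (Fin m)) (ρ : Perm (Fin r))

lemma coe_shufflePerm : ⇑(shufflePerm A hA τ ρ) = Fin.append (A.orderEmbOfFin hA ∘ τ)
    (Aᶜ.orderEmbOfFin (card_compl_of_card_eq hA) ∘ ρ) := by
  simp [shufflePerm]

@[simp]
lemma shufflePerm_castAdd (i : Fin m) :
    shufflePerm A hA τ ρ (Fin.castAdd r i) = A.orderEmbOfFin hA (τ i) := by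
  simp [coe_shufflePerm]

@[simp]
lemma shufflePerm_natAdd (j : Fin r) :
    shufflePerm A hA τ ρ (Fin.natAdd m j) =
      Aᶜ.orderEmbOfFin (card_compl_of_card_eq hA) (ρ j) := by
  simp [coe_shufflePerm]

lemma image_shufflePerm_castAdd :
    univ.image (fun i => shufflePerm A hA τ ρ (Fin.castAdd r i)) = A := by
  simp only [shufflePerm_castAdd]
  change univ.image (A.orderEmbOfFin hA ∘ τ) = A
  rw [← image_image, image_univ_equiv, image_orderEmbOfFin_univ]

end

lemma shufflePerm_injective :
    Injective fun x : {A : Finset (Fin (m + r)) // #A = m} × Perm (Fin m) × Perm (Fin r) =>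
      shufflePerm x.1.1 x.1.2 x.2.1 x.2.2 := by
  rintro ⟨⟨A, hA⟩, τ, ρ⟩ ⟨⟨A', hA'⟩, τ', ρ'⟩ h
  simp only at h
  obtain rfl : A = A' := by
    rw [← image_shufflePerm_castAdd hA τ ρ, ← image_shufflePerm_castAdd hA' τ' ρ', h]
  have hτ : τ = τ' := Equiv.ext fun i => (A.orderEmbOfFin hA).injective <| by
    simpa using congr($h (Fin.castAdd r i))
  have hρ : ρ = ρ' := Equiv.ext fun j =>
    (Aᶜ.orderEmbOfFin (card_compl_of_card_eq hA)).injective <| by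
      simpa using congr($h (Fin.natAdd m j))
  subst hτ hρ
  rfl

lemma sum_perm_eq_sum_shufflePerm {M : Type*} [AddCommMonoid M] (f : Perm (Fin (m + r)) → M) :
    ∑ σ, f σ = ∑ A : {A : Finset (Fin (m + r)) // #A = m}, ∑ τ, ∑ ρ,
      f (shufflePerm A.1 A.2 τ ρ) := by
  have hcard : Fintype.card ({A : Finset (Fin (m + r)) // #A = m} × Perm (Fin m) × Perm (Fin r))
      = Fintype.card (Perm (Fin (m + r))) := by
    simp only [Fintype.card_prod, Fintype.card_finset_len, Fintype.card_perm, Fintype.card_fin,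
      ← mul_assoc]
    rw [← Nat.choose_mul_factorial_mul_factorial (Nat.le_add_right m r), Nat.add_sub_cancel_left]
  have hbij := (Fintype.bijective_iff_injective_and_card _).mpr ⟨shufflePerm_injective, hcard⟩
  rw [← Fintype.sum_bijective _ hbij _ _ fun _ => rfl]
  simp only [Fintype.sum_prod_type]

lemma inversions_eq_sum {n : ℕ} (σ : Perm (Fin n)) :
    inversions σ = ∑ i, ∑ j, if i < j ∧ σ j < σ i then 1 else 0 := by
  rw [inversions, card_filter, ← univ_product_univ, sum_product]

lemma Finset.sum_orderEmbOfFin {α M : Type*} [LinearOrder α] [AddCommMonoid M] (s : Finset α)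
    {k : ℕ} (h : #s = k) (f : α → M) : ∑ x ∈ s, f x = ∑ i, f (s.orderEmbOfFin h i) := by
  conv_lhs => rw [← map_orderEmbOfFin_univ s h]
  exact sum_map _ _ _

variable {A : Finset (Fin (m + r))} (hA : #A = m) (τ : Perm (Fin m)) (ρ : Perm (Fin r))

lemma crossings_eq_sum : crossings A = ∑ i : Fin m, ∑ j : Fin r,
    if Aᶜ.orderEmbOfFin (card_compl_of_card_eq hA) j < A.orderEmbOfFin hA i then 1 else 0 := by
  rw [crossings, sum_orderEmbOfFin A hA]
  exact sum_congr rfl fun i _ => sum_orderEmbOfFin _ _ _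

lemma inversions_shufflePerm :
    inversions (shufflePerm A hA τ ρ) = inversions τ + inversions ρ + crossings A := by
  have castAdd_lt_castAdd (i i' : Fin m) : Fin.castAdd r i < Fin.castAdd r i' ↔ i < i' := Iff.rfl
  have castAdd_lt_natAdd (i : Fin m) (j : Fin r) : Fin.castAdd r i < Fin.natAdd m j := by
    simp only [Fin.lt_def, Fin.val_castAdd, Fin.val_natAdd]; omega
  have not_natAdd_lt_castAdd (i : Fin m) (j : Fin r) : ¬ Fin.natAdd m j < Fin.castAdd r i :=
    (castAdd_lt_natAdd i j).asymm
  have crossings_reindex : crossings A = ∑ i, ∑ j,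
      if Aᶜ.orderEmbOfFin (card_compl_of_card_eq hA) (ρ j) < A.orderEmbOfFin hA (τ i)
      then 1 else 0 := by
    rw [crossings_eq_sum hA, ← Equiv.sum_comp τ]
    exact sum_congr rfl fun i _ => (Equiv.sum_comp ρ _).symm
  simp only [inversions_eq_sum, Fin.sum_univ_add, shufflePerm_castAdd, shufflePerm_natAdd,
    castAdd_lt_castAdd, castAdd_lt_natAdd, not_natAdd_lt_castAdd, Fin.natAdd_lt_natAdd_iff,
    OrderEmbedding.lt_iff_lt, true_and, false_and, if_false, sum_const_zero,
    crossings_reindex, sum_add_distrib]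
  ring

end Shuffle

section QFactorial

variable {m r : ℕ}

def shuffleWeight (q : ℝ) (m r : ℕ) : ℝ :=
  ∑ A : {A : Finset (Fin (m + r)) // #A = m}, q ^ crossings A.1

lemma inversions_one (n : ℕ) : inversions (1 : Perm (Fin n)) = 0 := by
  rw [inversions, card_eq_zero, filter_eq_empty_iff]
  exact fun _ _ h => h.1.asymm h.2

lemma sum_shufflePerm_mul_pow_inversions (q : ℝ) (f : Perm (Fin m) → ℝ)
    (g : Perm (Fin r) → ℝ) :
    ∑ A : {A : Finset (Fin (m + r)) // #A = m}, ∑ τ, ∑ ρ,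
        f τ * g ρ * q ^ inversions (shufflePerm A.1 A.2 τ ρ) =
      shuffleWeight q m r * (∑ τ, f τ * q ^ inversions τ) *
        ∑ ρ, g ρ * q ^ inversions ρ := by
  rw [shuffleWeight, sum_mul, sum_mul]
  refine sum_congr rfl fun A _ => ?_
  rw [mul_assoc, sum_mul_sum, mul_sum]
  refine sum_congr rfl fun τ _ => ?_
  rw [mul_sum]
  refine sum_congr rfl fun ρ _ => ?_
  rw [inversions_shufflePerm]
  ring

lemma sum_pow_inversions_add (q : ℝ) :
    ∑ σ : Perm (Fin (m + r)), q ^ inversions σ =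
      shuffleWeight q m r * (∑ τ : Perm (Fin m), q ^ inversions τ) *
        ∑ ρ : Perm (Fin r), q ^ inversions ρ := by
  rw [sum_perm_eq_sum_shufflePerm]
  simpa using sum_shufflePerm_mul_pow_inversions q (fun _ : Perm (Fin m) => 1)
    (fun _ : Perm (Fin r) => 1)

lemma crossings_compl_singleton {t : ℕ} (y : Fin (t + 1)) :
    crossings ({y}ᶜ : Finset (Fin (t + 1))) = t - y := by
  have hfilter : ({y}ᶜ : Finset (Fin (t + 1))).filter (y < ·) = Ioi y := by
    ext z
    simp only [mem_filter, mem_compl, mem_singleton, mem_Ioi, and_iff_right_iff_imp]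
    exact fun h => h.ne'
  rw [crossings, compl_compl]
  simp only [sum_singleton]
  rw [← card_filter, hfilter, Fin.card_Ioi, Nat.add_sub_cancel]

lemma shuffleWeight_one (q : ℝ) (t : ℕ) : shuffleWeight q t 1 = qint q (t + 1) := by
  have hcard (y : Fin (t + 1)) : #({y}ᶜ : Finset (Fin (t + 1))) = t := by simp [card_compl]
  have hbij : Bijective fun y : Fin (t + 1) =>
      (⟨{y}ᶜ, hcard y⟩ : {A : Finset (Fin (t + 1)) // #A = t}) :=
    (Fintype.bijective_iff_injective_and_card _).mpr
      ⟨fun y y' h => by simpa using congr_arg Subtype.val h, by simp⟩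
  rw [shuffleWeight, ← Fintype.sum_bijective _ hbij _ _ fun _ => rfl]
  simp only [crossings_compl_singleton, qint, Fin.sum_univ_eq_sum_range (fun i => q ^ (t - i))]
  exact sum_range_reflect (q ^ ·) (t + 1)

lemma sum_pow_inversions (q : ℝ) (n : ℕ) :
    ∑ σ : Perm (Fin n), q ^ inversions σ = qfact q n := by
  induction n with
  | zero => simp [inversions_one, qfact]
  | succ n ih =>
    rw [sum_pow_inversions_add (r := 1), shuffleWeight_one, ih,
      Fintype.sum_subsingleton _ (1 : Perm (Fin 1)), inversions_one, pow_zero, mul_one,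
      qfact, qfact, prod_Icc_succ_top (Nat.le_add_left 1 n), mul_comm]

lemma qfact_add (q : ℝ) (m r : ℕ) :
    qfact q (m + r) = shuffleWeight q m r * qfact q m * qfact q r := by
  simp only [← sum_pow_inversions, sum_pow_inversions_add]

@[simp]
lemma qfact_zero (q : ℝ) : qfact q 0 = 1 := by simp [qfact]

lemma qfact_pos {q : ℝ} (hq : 0 < q) (n : ℕ) : 0 < qfact q n :=
  prod_pos fun _ hi => sum_pos (fun j _ => pow_pos hq j) ⟨0, mem_range.mpr (mem_Icc.mp hi).1⟩

end QFactorial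

section Descents

variable {α : Type*} [LinearOrder α] {n m r : ℕ}

/-- Positions are `0`-indexed: `d ∈ descents f` iff `f d < f (d - 1)`, i.e. `d` is a descent
of the word `f 0 ⋯ f (n - 1)` in the usual `1`-indexed sense. -/
def descents (f : Fin n → α) : Finset ℕ :=
  (univ.filter fun j : Fin n => ∃ i : Fin n, (i : ℕ) + 1 = j ∧ f j < f i).image Fin.val

lemma mem_descents {f : Fin n → α} {d : ℕ} :
    d ∈ descents f ↔ ∃ i j : Fin n, (i : ℕ) + 1 = d ∧ (j : ℕ) = d ∧ f j < f i := by
  simp only [descents, mem_image, mem_filter, mem_univ, true_and]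
  constructor
  · rintro ⟨j, ⟨i, hij, hlt⟩, rfl⟩
    exact ⟨i, j, hij, rfl, hlt⟩
  · rintro ⟨i, j, hi, rfl, hlt⟩
    exact ⟨j, ⟨i, hi, hlt⟩, rfl⟩

lemma descents_comp_strictMono {β : Type*} [LinearOrder β] (f : Fin n → α) {e : α → β}
    (he : StrictMono e) : descents (e ∘ f) = descents f := by
  ext d
  simp only [mem_descents, Function.comp_apply, he.lt_iff_lt]

lemma descents_eq_empty_iff {f : Fin n → α} : descents f = ∅ ↔ Monotone f := by
  rw [eq_empty_iff_forall_notMem]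
  constructor
  · intro hf
    cases n with
    | zero => exact fun i => i.elim0
    | succ n =>
      refine Fin.monotone_iff_le_succ.mpr fun i => not_lt.mp fun hlt => hf (i + 1) ?_
      exact mem_descents.mpr ⟨i.castSucc, i.succ, rfl, rfl, hlt⟩
  · rintro hf d hd
    obtain ⟨i, j, hi, hj, hlt⟩ := mem_descents.mp hd
    exact (hf (show i ≤ j from Fin.le_def.mpr (by omega))).not_gt hlt

lemma descents_perm_eq_empty_iff {σ : Perm (Fin n)} : descents σ = ∅ ↔ σ = 1 := by
  rw [descents_eq_empty_iff]
  refine ⟨fun hσ => ?_, fun hσ => hσ ▸ monotone_id⟩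
  exact Equiv.ext fun i => congr_fun ((hσ.strictMono_of_injective σ.injective).eq_id) i

lemma forall_lt_iff_mem_iff_descents_eq (f : Fin n → α) {S : Finset ℕ}
    (hS : ∀ d ∈ S, 0 < d ∧ d < n) :
    (∀ i : Fin (n - 1), (f ⟨i.val + 1, by have := i.isLt; omega⟩
        < f ⟨i.val, by have := i.isLt; omega⟩ ↔ i.val + 1 ∈ S)) ↔ descents f = S := by
  constructor
  · intro h
    ext d
    rw [mem_descents]
    constructor
    · rintro ⟨i, j, rfl, hj, hlt⟩
      rw [show j = ⟨i + 1, by omega⟩ from Fin.ext hj] at hlt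
      exact (h ⟨i, by omega⟩).mp hlt
    · intro hd
      obtain ⟨e, rfl⟩ : ∃ e, d = e + 1 := Nat.exists_eq_add_one.mpr (hS d hd).1
      have := (hS _ hd).2
      exact ⟨⟨e, by omega⟩, ⟨e + 1, by omega⟩, rfl, rfl, (h ⟨e, by omega⟩).mpr hd⟩
  · rintro rfl i
    rw [mem_descents]
    constructor
    · exact fun hlt => ⟨_, _, rfl, rfl, hlt⟩
    · rintro ⟨i', j', hi, hj, hlt⟩
      convert hlt using 2 <;> exact Fin.ext (by simp only; omega)

variable (u : Fin m → α) (v : Fin r → α)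

lemma descents_append_filter_lt : (descents (Fin.append u v)).filter (· < m) = descents u := by
  ext d
  simp only [mem_filter, mem_descents]
  constructor
  · rintro ⟨⟨i, j, hi, hj, hlt⟩, hd⟩
    obtain ⟨i, rfl⟩ : ∃ i', i = Fin.castAdd r i' := ⟨i.castLT (by omega), by simp⟩
    obtain ⟨j, rfl⟩ : ∃ j', j = Fin.castAdd r j' := ⟨j.castLT (by omega), by simp⟩
    simp only [Fin.append_left, Fin.val_castAdd] at hi hj hlt
    exact ⟨i, j, hi, hj, hlt⟩
  · rintro ⟨i, j, hi, rfl, hlt⟩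
    exact ⟨⟨Fin.castAdd r i, Fin.castAdd r j, hi, rfl, by simpa using hlt⟩, j.isLt⟩

lemma descents_append_filter_gt :
    (descents (Fin.append u v)).filter (m < ·) = (descents v).map (addLeftEmbedding m) := by
  ext d
  simp only [mem_filter, mem_descents, mem_map, addLeftEmbedding_apply]
  constructor
  · rintro ⟨⟨i, j, hi, hj, hlt⟩, hd⟩
    obtain ⟨i, rfl⟩ : ∃ i', i = Fin.natAdd m i' :=
      ⟨_, (Fin.natAdd_subNat_cast (show m ≤ i by omega)).symm⟩
    obtain ⟨j, rfl⟩ : ∃ j', j = Fin.natAdd m j' :=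
      ⟨_, (Fin.natAdd_subNat_cast (show m ≤ j by omega)).symm⟩
    simp only [Fin.append_right, Fin.val_natAdd] at hi hj hlt
    exact ⟨j, ⟨i, j, by omega, rfl, hlt⟩, hj⟩
  · rintro ⟨d, ⟨i, j, hi, rfl, hlt⟩, rfl⟩
    exact ⟨⟨Fin.natAdd m i, Fin.natAdd m j, by simp only [Fin.val_natAdd]; omega, rfl,
      by simpa using hlt⟩, by omega⟩

end Descents

lemma eq_insert_or_eq_iff_filter {α : Type*} [LinearOrder α] {S D : Finset α} {m : α}
    (hS : ∀ d ∈ S, d < m) :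
    (D = insert m S ∨ D = S) ↔ D.filter (· < m) = S ∧ D.filter (m < ·) = ∅ := by
  constructor
  · rintro (rfl | rfl) <;> constructor <;> ext d <;> simp only [mem_filter, mem_insert] <;> grind
  · rintro ⟨hlt, hgt⟩
    simp only [Finset.ext_iff, mem_filter] at hlt hgt
    by_cases hm : m ∈ D
    · left; ext d; grind
    · right; ext d; grind

section DescentWeight

variable {m r : ℕ}

section

variable {A : Finset (Fin (m + r))} (hA : #A = m) (τ : Perm (Fin m)) (ρ : Perm (Fin r))

lemma descents_shufflePerm_filter_lt :
    (descents (shufflePerm A hA τ ρ)).filter (· < m) = descents τ := by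
  rw [coe_shufflePerm, descents_append_filter_lt,
    descents_comp_strictMono _ (A.orderEmbOfFin hA).strictMono]

lemma descents_shufflePerm_filter_gt :
    (descents (shufflePerm A hA τ ρ)).filter (m < ·) =
      (descents ρ).map (addLeftEmbedding m) := by
  rw [coe_shufflePerm, descents_append_filter_gt,
    descents_comp_strictMono _ (Aᶜ.orderEmbOfFin _).strictMono]

end

def descentWeight (q : ℝ) (n : ℕ) (S : Finset ℕ) : ℝ :=
  ∑ σ ∈ univ.filter (fun σ : Perm (Fin n) => descents σ = S), q ^ inversions σ

lemma descentWeight_empty (q : ℝ) (n : ℕ) : descentWeight q n ∅ = 1 := by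
  have : univ.filter (fun σ : Perm (Fin n) => descents σ = ∅) = {1} := by
    ext σ
    simp [descents_perm_eq_empty_iff]
  rw [descentWeight, this, sum_singleton, inversions_one, pow_zero]

lemma sum_filter_descents_split (q : ℝ) (S T : Finset ℕ) :
    ∑ σ ∈ univ.filter (fun σ : Perm (Fin (m + r)) => (descents σ).filter (· < m) = S ∧
        (descents σ).filter (m < ·) = T.map (addLeftEmbedding m)), q ^ inversions σ =
      shuffleWeight q m r * descentWeight q m S * descentWeight q r T := by
  have key := sum_shufflePerm_mul_pow_inversions q
    (fun τ : Perm (Fin m) => if descents τ = S then 1 else 0)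
    (fun ρ : Perm (Fin r) => if descents ρ = T then 1 else 0)
  simp only [boole_mul, ← sum_filter] at key
  rw [descentWeight, descentWeight, ← key, sum_filter, sum_perm_eq_sum_shufflePerm]
  simp only [descents_shufflePerm_filter_lt, descents_shufflePerm_filter_gt, map_inj, ite_and,
    ite_mul, one_mul, zero_mul]

lemma descentWeight_insert_add (q : ℝ) {S : Finset ℕ} (hS : ∀ d ∈ S, d < m) :
    descentWeight q (m + r) (insert m S) + descentWeight q (m + r) S =
      shuffleWeight q m r * descentWeight q m S := by
  have hmS : m ∉ S := fun hm => (hS m hm).false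
  have hdisj : Disjoint (univ.filter fun σ : Perm (Fin (m + r)) => descents σ = insert m S)
      (univ.filter fun σ => descents σ = S) :=
    disjoint_filter.mpr fun σ _ h h' => hmS (h' ▸ h ▸ mem_insert_self m S)
  rw [← mul_one (_ * _), ← descentWeight_empty q r, ← sum_filter_descents_split, map_empty,
    descentWeight, descentWeight, ← sum_union hdisj, ← filter_or]
  simp only [eq_insert_or_eq_iff_filter hS]

end DescentWeight

section Determinant

lemma Matrix.det_eq_of_last_row {R : Type*} [CommRing R] {k : ℕ}
    (M : Matrix (Fin (k + 2)) (Fin (k + 2)) R)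
    (h : ∀ j : Fin k, M (Fin.last _) j.castSucc.castSucc = 0) :
    M.det = M (Fin.last _) (Fin.last _) * (M.submatrix Fin.castSucc Fin.castSucc).det -
      M (Fin.last _) (Fin.last k).castSucc *
        (M.submatrix Fin.castSucc (Fin.last k).castSucc.succAbove).det := by
  rw [Matrix.det_succ_row M (Fin.last _), Fin.sum_univ_castSucc, Fin.sum_univ_castSucc]
  simp only [h, mul_zero, zero_mul, sum_const_zero, zero_add, Fin.succAbove_last,
    Fin.val_last, Fin.val_castSucc]
  rw [(Odd.neg_one_pow ⟨k, by ring⟩ : (-1 : R) ^ (k + 1 + k) = -1),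
    (Even.neg_one_pow ⟨k + 1, by ring⟩ : (-1 : R) ^ (k + 1 + (k + 1)) = 1)]
  ring

noncomputable def descentMatrix (q : ℝ) (k : ℕ) (s : ℕ → ℕ) :
    Matrix (Fin (k + 1)) (Fin (k + 1)) ℝ :=
  Matrix.of fun i j : Fin (k + 1) =>
    if s i.val ≤ s (j.val + 1) then 1 / qfact q (s (j.val + 1) - s i.val) else 0

lemma det_descentMatrix_succ (q : ℝ) {k : ℕ} {s : ℕ → ℕ}
    (hs : StrictMonoOn s (Set.Iic (k + 2))) :
    (descentMatrix q (k + 1) s).det =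
      (descentMatrix q k s).det / qfact q (s (k + 2) - s (k + 1)) -
        (descentMatrix q k (update s (k + 1) (s (k + 2)))).det := by
  have hlt {a b : ℕ} (hab : a < b) (hb : b ≤ k + 2) : s a < s b := hs (hab.le.trans hb) hb hab
  have minor_last : (descentMatrix q (k + 1) s).submatrix Fin.castSucc Fin.castSucc =
      descentMatrix q k s := by
    ext i j
    simp [descentMatrix]
  have minor_update : (descentMatrix q (k + 1) s).submatrix Fin.castSucc
      (Fin.last k).castSucc.succAbove = descentMatrix q k (update s (k + 1) (s (k + 2))) := by
    ext i j
    have hi : update s (k + 1) (s (k + 2)) i = s i := update_of_ne (by omega) _ _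
    refine Fin.lastCases ?_ (fun j => ?_) j
    · simp [descentMatrix, hi]
    · simp [descentMatrix, hi, update_of_ne (show (j : ℕ) + 1 ≠ k + 1 by omega)]
  rw [Matrix.det_eq_of_last_row _ fun j => ?_, minor_last, minor_update]
  · simp only [descentMatrix, Matrix.of_apply, Fin.val_last, Fin.val_castSucc, le_refl,
      (hlt (Nat.lt_succ_self (k + 1)) le_rfl).le, if_true, tsub_self, qfact_zero, div_one,
      one_mul]
    ring
  · simp [descentMatrix, hlt (show (j : ℕ) + 1 < k + 1 by omega) (by omega)]

end Determinant

lemma strictMonoOn_update_succ {s : ℕ → ℕ} {k : ℕ} (hs : StrictMonoOn s (Set.Iic (k + 2))) :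
    StrictMonoOn (update s (k + 1) (s (k + 2))) (Set.Iic (k + 1)) := by
  intro a (ha : a ≤ k + 1) b (hb : b ≤ k + 1) hab
  rw [update_of_ne (by omega)]
  rcases eq_or_ne b (k + 1) with rfl | hb'
  · rw [update_self]
    exact hs (show a ≤ k + 2 by omega) (le_refl (k + 2)) (by omega)
  · rw [update_of_ne hb']
    exact hs (show a ≤ k + 2 by omega) (show b ≤ k + 2 by omega) hab

lemma descentWeight_image_eq {q : ℝ} (hq : 0 < q) (k : ℕ) {s : ℕ → ℕ} (hs0 : s 0 = 0)
    (hs : StrictMonoOn s (Set.Iic (k + 1))) :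
    descentWeight q (s (k + 1)) ((Icc 1 k).image s) =
      qfact q (s (k + 1)) * (descentMatrix q k s).det := by
  induction k generalizing s with
  | zero =>
    simp [descentWeight_empty, descentMatrix, hs0, (qfact_pos hq _).ne']
  | succ k ih =>
    have hlt {a b : ℕ} (hab : a < b) (hb : b ≤ k + 2) : s a < s b := hs (hab.le.trans hb) hb hab
    obtain ⟨r, hr⟩ : ∃ r, s (k + 2) = s (k + 1) + r :=
      Nat.exists_eq_add_of_le (hlt (Nat.lt_succ_self _) le_rfl).le
    have hinsert : (Icc 1 (k + 1)).image s = insert (s (k + 1)) ((Icc 1 k).image s) := by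
      rw [← insert_Icc_right_eq_Icc_add_one (by omega), image_insert]
    have hbelow : ∀ d ∈ (Icc 1 k).image s, d < s (k + 1) := by
      simp only [mem_image, mem_Icc]
      rintro _ ⟨i, hi, rfl⟩
      exact hlt (by omega) (by omega)
    have himage : (Icc 1 k).image (update s (k + 1) (s (k + 2))) = (Icc 1 k).image s :=
      image_congr fun i hi => update_of_ne (by have := mem_Icc.mp hi; omega) _ _
    have ih_s := ih hs0 (hs.mono (Set.Iic_subset_Iic.mpr (by omega)))
    have ih_update := ih (by rw [update_of_ne (by omega), hs0]) (strictMonoOn_update_succ hs)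
    rw [update_self, himage, hr] at ih_update
    have hrec := descentWeight_insert_add q (r := r) hbelow
    rw [ih_s, ih_update] at hrec
    rw [hinsert, hr, det_descentMatrix_succ q hs, hr, Nat.add_sub_cancel_left]
    rw [qfact_add] at hrec ⊢
    have := (qfact_pos hq r).ne'
    field_simp
    linear_combination hrec

/-- Under the Mallows measure `P_q(σ) = q^{inv σ}/[n]_q!` on `S_n`, the probability that the
descent set equals `S = {s 1 < … < s k}` is `det(1/[s_{j+1} - s_i]_q!)_{i,j=0}^k`, with
`s 0 = 0`, `s (k+1) = n`, and `1/[m]_q! = 0` for `m < 0` (the `if`-clause). -/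
theorem mallows_descent_set_det (q : ℝ) (hq : 0 < q) (n k : ℕ) (S : Finset ℕ) (s : ℕ → ℕ)
    (hs0 : s 0 = 0) (hsn : s (k + 1) = n)
    (hmono : ∀ i ≤ k, s i < s (i + 1))
    (hS : S = (Finset.Icc 1 k).image s) :
    (∑ σ ∈ Finset.univ.filter (fun σ : Equiv.Perm (Fin n) =>
        ∀ i : Fin (n - 1), (σ ⟨i.val + 1, by have := i.isLt; omega⟩
            < σ ⟨i.val, by have := i.isLt; omega⟩ ↔ i.val + 1 ∈ S)), q ^ inversions σ)
        / qfact q n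
      = Matrix.det (Matrix.of fun i j : Fin (k + 1) =>
          if s i.val ≤ s (j.val + 1) then 1 / qfact q (s (j.val + 1) - s i.val) else 0) := by
  have hs : StrictMonoOn s (Set.Iic (k + 1)) :=
    strictMonoOn_Iic_of_lt_succ fun i hi => hmono i (Order.lt_add_one_iff.mp hi)
  have hS_range : ∀ d ∈ S, 0 < d ∧ d < n := by
    simp only [hS, mem_image, mem_Icc]
    rintro _ ⟨i, hi, rfl⟩
    have hlt {a b : ℕ} (hab : a < b) (hb : b ≤ k + 1) : s a < s b := hs (hab.le.trans hb) hb hab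
    exact ⟨hs0 ▸ hlt (by omega) (by omega), hsn ▸ hlt (by omega) le_rfl⟩
  simp only [forall_lt_iff_mem_iff_descents_eq _ hS_range]
  change descentWeight q n S / qfact q n = (descentMatrix q k s).det
  subst hS hsn
  rw [descentWeight_image_eq hq k hs0 hs, mul_div_cancel_left₀ _ (qfact_pos hq _).ne']
end
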